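/- arXiv:2308.05488 — 9 statements merged into one kernel-verified Lean document; each statement's English description precedes it below -/
import Mathlib

section
/- Let H₁ and H₂ be complex Hilbert spaces and let L : H₁ × H₂ → H₁ × H₂ be the bounded block lower-triangular operator L = [[A, 0], [B, C]], where A : H₁ → H₁, B : H₁ → H₂ and C : H₂ → H₂ are bounded linear operators. Then L is unitary if and only if the following three conditions hold: (1) A is a co-isometry, i.e. A A* = I on H₁; (2) C is an isometry, i.e. C* C = I on H₂; (3) there exists a surjective linear isometry V from the closed subspace ker A of H₁ onto the closed subspace (range C)ᗮ of H₂ such that B x = V (P x) for all x ∈ H₁, where P denotes the orthogonal projection of H₁ onto ker A. -/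
/-!
Writing `L = [[A, 0], [B, C]]`, the identities `L* L = 1` and `L L* = 1` say blockwise that
`A*A + B*B = 1`, `C*B = 0`, `C*C = 1`, `AA* = 1`, `BA* = 0` and `BB* + CC* = 1`.
For a co-isometry `A` the operator `1 - A*A` is the projection onto `ker A`, and for an isometry
`C` the operator `1 - CC*` is the projection onto `(range C)ᗮ`. Hence the two diagonal identities
involving `B` say that `B*B` and `BB*` are these projections, i.e. that `B` is a partial isometry
from `ker A` onto `(range C)ᗮ`, which is the factorization `B = V P`; the off-diagonal
identities follow from it.
-/

open scoped InnerProduct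

namespace ContinuousLinearMap

variable {𝕜 E F : Type*} [RCLike 𝕜]
  [NormedAddCommGroup E] [InnerProductSpace 𝕜 E] [NormedAddCommGroup F] [InnerProductSpace 𝕜 F]

section Adjoint

variable [CompleteSpace E] [CompleteSpace F]

theorem adjoint_comp_eq_zero {G : Type*} [NormedAddCommGroup G] [InnerProductSpace 𝕜 G]
    [CompleteSpace G] {S : F →L[𝕜] G} {T : E →L[𝕜] F} (h : S ∘L T = 0) : T† ∘L S† = 0 := by
  rw [← adjoint_comp, h, map_zero]

theorem norm_apply_eq_of_adjoint_apply_apply {T : E →L[𝕜] F} {x : E} (h : (T†) (T x) = x) :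
    ‖T x‖ = ‖x‖ := by
  rw [@norm_eq_sqrt_re_inner 𝕜, @norm_eq_sqrt_re_inner 𝕜 E, ← adjoint_inner_left, h]

theorem adjoint_apply_mem_orthogonal_ker (T : E →L[𝕜] F) (y : F) : (T†) y ∈ T.kerᗮ := by
  rw [orthogonal_ker]
  exact Submodule.le_topologicalClosure _ (LinearMap.mem_range_self _ _)

theorem starProjection_ker {T : E →L[𝕜] F} (hT : T ∘L T† = 1) :
    T.ker.starProjection = 1 - T† ∘L T := by
  ext x
  refine Submodule.eq_starProjection_of_mem_orthogonal ?_ ?_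
  · rw [LinearMap.mem_ker, coe_coe, ← comp_apply, comp_sub, ← comp_assoc, hT]
    simp
  · rw [sub_apply, one_apply_eq_self, sub_sub_cancel, comp_apply]
    exact adjoint_apply_mem_orthogonal_ker T _

theorem starProjection_orthogonal_range {T : E →L[𝕜] F} (hT : T† ∘L T = 1) :
    T.rangeᗮ.starProjection = 1 - T ∘L T† := by
  ext y
  refine Submodule.eq_starProjection_of_mem_orthogonal ?_ ?_
  · rw [orthogonal_range, LinearMap.mem_ker, coe_coe, ← comp_apply, comp_sub, ← comp_assoc, hT]
    simp
  · rw [sub_apply, one_apply_eq_self, sub_sub_cancel]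
    exact Submodule.le_orthogonal_orthogonal _ (LinearMap.mem_range_self _ _)

section PartialIsometry

variable {K : Submodule 𝕜 E} {W : Submodule 𝕜 F} [CompleteSpace K] [CompleteSpace W]
  {B : E →L[𝕜] F} (V : K ≃ₗᵢ[𝕜] W)

theorem adjoint_comp_self_eq_starProjection (hB : ∀ x, B x = V (K.orthogonalProjectionOnto x)) :
    B† ∘L B = K.starProjection := by
  obtain rfl : B = W.subtypeL ∘L (V : K →L[𝕜] W) ∘L K.orthogonalProjectionOnto := ext hB
  ext x
  simp [adjoint_comp, Submodule.adjoint_orthogonalProjectionOnto, Submodule.adjoint_subtypeL]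

theorem comp_adjoint_eq_starProjection (hB : ∀ x, B x = V (K.orthogonalProjectionOnto x)) :
    B ∘L B† = W.starProjection := by
  obtain rfl : B = W.subtypeL ∘L (V : K →L[𝕜] W) ∘L K.orthogonalProjectionOnto := ext hB
  ext x
  simp [adjoint_comp, Submodule.adjoint_orthogonalProjectionOnto, Submodule.adjoint_subtypeL]

end PartialIsometry

theorem exists_linearIsometryEquiv_ker_orthogonal_range {A : E →L[𝕜] E} {B : E →L[𝕜] F}
    {C : F →L[𝕜] F} (hA : A ∘L A† = 1) (hBA : B ∘L A† = 0) (hAB : A† ∘L A + B† ∘L B = 1)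
    (hCB : C† ∘L B = 0) (hBC : B ∘L B† + C ∘L C† = 1) :
    ∃ V : A.ker ≃ₗᵢ[𝕜] C.rangeᗮ, ∀ x, B x = V (A.ker.orthogonalProjectionOnto x) := by
  have hB_mem : ∀ x, B x ∈ C.rangeᗮ := fun x ↦ by
    rw [orthogonal_range, LinearMap.mem_ker, coe_coe, ← comp_apply, hCB, zero_apply]
  have hB_norm : ∀ x ∈ A.ker, ‖B x‖ = ‖x‖ := fun x (hx : A x = 0) ↦ by
    refine norm_apply_eq_of_adjoint_apply_apply ?_
    simpa [hx] using congr($hAB x)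
  let V₀ : A.ker →ₗᵢ[𝕜] C.rangeᗮ :=
    { toLinearMap := (B.toLinearMap ∘ₗ A.ker.subtype).codRestrict _ fun x ↦ hB_mem x
      norm_map' := fun x ↦ hB_norm x x.2 }
  have hV₀ : Function.Surjective V₀ := by
    rintro ⟨w, hw⟩
    rw [orthogonal_range, LinearMap.mem_ker, coe_coe] at hw
    have hAB' : A ∘L B† = 0 := by simpa using adjoint_comp_eq_zero hBA
    refine ⟨⟨(B†) w, by simpa using congr($hAB' w)⟩, Subtype.ext ?_⟩
    change B ((B†) w) = w
    simpa [hw] using congr($hBC w)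
  refine ⟨.ofSurjective V₀ hV₀, fun x ↦ ?_⟩
  change B x = B (A.ker.starProjection x)
  rw [starProjection_ker hA, sub_apply, one_apply_eq_self, map_sub, comp_apply, ← comp_apply B,
    hBA, zero_apply, sub_zero]

end Adjoint

noncomputable def lowerTriangularBlock (A : E →L[𝕜] E) (B : E →L[𝕜] F) (C : F →L[𝕜] F) :
    WithLp 2 (E × F) →L[𝕜] WithLp 2 (E × F) :=
  (WithLp.prodContinuousLinearEquiv 2 𝕜 E F).symm.toContinuousLinearMap ∘L
    ((A ∘L fst 𝕜 E F).prod (B ∘L fst 𝕜 E F + C ∘L snd 𝕜 E F)) ∘L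
      (WithLp.prodContinuousLinearEquiv 2 𝕜 E F).toContinuousLinearMap

variable {A : E →L[𝕜] E} {B : E →L[𝕜] F} {C : F →L[𝕜] F}

@[simp]
theorem lowerTriangularBlock_apply (v : WithLp 2 (E × F)) :
    lowerTriangularBlock A B C v = WithLp.toLp 2 (A v.fst, B v.fst + C v.snd) :=
  rfl

theorem eq_one_iff_forall_toLp_prod {M : WithLp 2 (E × F) →L[𝕜] WithLp 2 (E × F)} :
    M = 1 ↔ ∀ x y, M (WithLp.toLp 2 (x, y)) = WithLp.toLp 2 (x, y) :=
  ⟨fun h x y ↦ by rw [h, one_apply_eq_self], fun h ↦ ext fun v ↦ h v.fst v.snd⟩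

variable [CompleteSpace E] [CompleteSpace F]

@[simp]
theorem adjoint_lowerTriangularBlock_apply (v : WithLp 2 (E × F)) :
    ((lowerTriangularBlock A B C)†) v =
      WithLp.toLp 2 ((A†) v.fst + (B†) v.snd, (C†) v.snd) := by
  refine ext_inner_right 𝕜 fun w ↦ ?_
  simp only [adjoint_inner_left, lowerTriangularBlock_apply, WithLp.prod_inner_apply,
    WithLp.ofLp_fst, WithLp.ofLp_snd, inner_add_left, inner_add_right]
  ring

theorem adjoint_lowerTriangularBlock_mul_self_eq_one_iff :
    (lowerTriangularBlock A B C)† * lowerTriangularBlock A B C = 1 ↔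
      A† ∘L A + B† ∘L B = 1 ∧ C† ∘L B = 0 ∧ C† ∘L C = 1 := by
  simp only [eq_one_iff_forall_toLp_prod, mul_apply_eq_comp, lowerTriangularBlock_apply,
    adjoint_lowerTriangularBlock_apply, WithLp.toLp_fst, WithLp.toLp_snd, WithLp.toLp.injEq,
    Prod.mk.injEq, map_add]
  refine ⟨fun h ↦ ⟨ext fun x ↦ ?_, ext fun x ↦ ?_, ext fun y ↦ ?_⟩, fun ⟨h₁, h₂, h₃⟩ x y ↦ ?_⟩
  · simpa using (h x 0).1
  · simpa using (h x 0).2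
  · simpa using (h 0 y).2
  · have h₂' : B† ∘L C = 0 := by simpa using adjoint_comp_eq_zero h₂
    simp [← comp_apply, ← add_apply, h₁, h₂, h₂', h₃]

theorem lowerTriangularBlock_mul_adjoint_eq_one_iff :
    lowerTriangularBlock A B C * (lowerTriangularBlock A B C)† = 1 ↔
      A ∘L A† = 1 ∧ B ∘L A† = 0 ∧ B ∘L B† + C ∘L C† = 1 := by
  simp only [eq_one_iff_forall_toLp_prod, mul_apply_eq_comp, lowerTriangularBlock_apply,
    adjoint_lowerTriangularBlock_apply, WithLp.toLp_fst, WithLp.toLp_snd, WithLp.toLp.injEq,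
    Prod.mk.injEq, map_add]
  refine ⟨fun h ↦ ⟨ext fun x ↦ ?_, ext fun x ↦ ?_, ext fun y ↦ ?_⟩, fun ⟨h₁, h₂, h₃⟩ x y ↦ ?_⟩
  · simpa using (h x 0).1
  · simpa using (h x 0).2
  · simpa using (h 0 y).2
  · have h₂' : A ∘L B† = 0 := by simpa using adjoint_comp_eq_zero h₂
    simp [← comp_apply, ← add_apply, h₁, h₂, h₂', h₃]

theorem lowerTriangularBlock_mem_unitary_iff :
    lowerTriangularBlock A B C ∈ unitary (WithLp 2 (E × F) →L[𝕜] WithLp 2 (E × F)) ↔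
      A ∘L A† = 1 ∧ C† ∘L C = 1 ∧
        ∃ V : A.ker ≃ₗᵢ[𝕜] C.rangeᗮ, ∀ x, B x = V (A.ker.orthogonalProjectionOnto x) := by
  rw [Unitary.mem_iff, star_eq_adjoint, adjoint_lowerTriangularBlock_mul_self_eq_one_iff,
    lowerTriangularBlock_mul_adjoint_eq_one_iff]
  constructor
  · rintro ⟨⟨hAB, hCB, hC⟩, hA, hBA, hBC⟩
    exact ⟨hA, hC, exists_linearIsometryEquiv_ker_orthogonal_range hA hBA hAB hCB hBC⟩
  · rintro ⟨hA, hC, V, hB⟩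
    refine ⟨⟨?_, ext fun x ↦ ?_, hC⟩, hA, ext fun y ↦ ?_, ?_⟩
    · rw [adjoint_comp_self_eq_starProjection V hB, starProjection_ker hA, add_sub_cancel]
    · have hBx := (V (A.ker.orthogonalProjectionOnto x)).2
      rwa [← hB, orthogonal_range] at hBx
    · rw [comp_apply, hB, Submodule.orthogonalProjectionOnto_apply_of_mem_orthogonal
        (adjoint_apply_mem_orthogonal_ker A y), map_zero, Submodule.coe_zero, zero_apply]
    · rw [comp_adjoint_eq_starProjection V hB, starProjection_orthogonal_range hC, sub_add_cancel]

end ContinuousLinearMap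

/-- Lemma 7.1 (Appendix): a block lower-triangular operator
`L = [[A, 0], [B, C]]` on the Hilbert space direct sum `H₁ ⊕ H₂` is unitary
iff `A` is a co-isometry, `C` is an isometry, and `B = V ∘ P` where `P` is the
orthogonal projection onto `ker A` and `V` is a unitary map from `ker A`
onto `(range C)ᗮ`. -/
theorem stmt_0
    {H₁ H₂ : Type*}
    [NormedAddCommGroup H₁] [InnerProductSpace ℂ H₁] [CompleteSpace H₁]
    [NormedAddCommGroup H₂] [InnerProductSpace ℂ H₂] [CompleteSpace H₂]
    (A : H₁ →L[ℂ] H₁) (B : H₁ →L[ℂ] H₂) (C : H₂ →L[ℂ] H₂)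
    (L : WithLp 2 (H₁ × H₂) →L[ℂ] WithLp 2 (H₁ × H₂))
    (hL : ∀ (x : H₁) (y : H₂),
      L ((WithLp.equiv 2 (H₁ × H₂)).symm (x, y)) =
        (WithLp.equiv 2 (H₁ × H₂)).symm (A x, B x + C y)) :
    L ∈ unitary (WithLp 2 (H₁ × H₂) →L[ℂ] WithLp 2 (H₁ × H₂)) ↔
      (A.comp (ContinuousLinearMap.adjoint A) = ContinuousLinearMap.id ℂ H₁ ∧
       (ContinuousLinearMap.adjoint C).comp C = ContinuousLinearMap.id ℂ H₂ ∧
       ∃ V : (LinearMap.ker (A : H₁ →ₗ[ℂ] H₁)) ≃ₗᵢ[ℂ] ((LinearMap.range (C : H₂ →ₗ[ℂ] H₂))ᗮ : Submodule ℂ H₂),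
         ∀ x : H₁, B x = V (Submodule.orthogonalProjectionOnto (LinearMap.ker (A : H₁ →ₗ[ℂ] H₁)) x)) := by
  obtain rfl : L = ContinuousLinearMap.lowerTriangularBlock A B C :=
    ContinuousLinearMap.ext fun v ↦ hL v.fst v.snd
  exact ContinuousLinearMap.lowerTriangularBlock_mem_unitary_iff
end

section
/- Let X be a finite-dimensional complex inner product space and E a complex inner product space, and let A : X → X and C : X → E be linear maps such that A* A + C* C = I and every eigenvalue of A lies in the open unit disc. Then for every x ∈ X the sequence (C (Aⁿ x))_{n≥0} is square-summable and ∑_{n=0}^{∞} ‖C (Aⁿ x)‖² = ‖x‖²; in other words, the observability operator Γ defined by Γ x = (C x, C A x, C A² x, …) is a linear isometry from X into ℓ²(ℕ, E). -/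
/-!
The identity `A* A + C* C = I` says `‖C y‖² = ‖y‖² - ‖A y‖²`, so the partial sums of
`∑ ‖C (Aⁿ x)‖²` telescope to `‖x‖² - ‖Aⁿ x‖²`. Since the spectrum of `A` lies in the open unit
disc, its spectral radius is `< 1`, and Gelfand's formula gives `Aⁿ → 0`.
-/

open Filter Topology

theorem spectralRadius_lt_one_of_forall_norm_lt_one {A : Type*} [NormedRing A]
    [NormedAlgebra ℂ A] [CompleteSpace A] (a : A) (h : ∀ z ∈ spectrum ℂ a, ‖z‖ < 1) :
    spectralRadius ℂ a < 1 := by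
  rcases (spectrum ℂ a).eq_empty_or_nonempty with hempty | hne
  · simp [spectralRadius, hempty]
  · exact_mod_cast spectrum.spectralRadius_lt_of_forall_lt_of_nonempty hne
      fun z hz => by exact_mod_cast h z hz

/-- By Gelfand's formula, `‖a ^ n‖ ≤ c ^ n` eventually for any `c` strictly between the
spectral radius and `1`. -/
theorem tendsto_pow_nhds_zero_of_spectralRadius_lt_one {A : Type*} [NormedRing A]
    [NormedAlgebra ℂ A] [CompleteSpace A] {a : A} (h : spectralRadius ℂ a < 1) :
    Tendsto (fun n : ℕ => a ^ n) atTop (𝓝 0) := by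
  obtain ⟨c, hac, hc1⟩ := ENNReal.lt_iff_exists_nnreal_btwn.mp h
  have hbound : ∀ᶠ n : ℕ in atTop, ‖a ^ n‖ ≤ (c : ℝ) ^ n := by
    filter_upwards
      [(spectrum.pow_nnnorm_pow_one_div_tendsto_nhds_spectralRadius a).eventually_lt_const hac,
        eventually_ge_atTop 1] with n hn hn1
    have hnpos : (0 : ℝ) < n := by exact_mod_cast hn1
    have hpow := ENNReal.rpow_le_rpow hn.le hnpos.le
    rw [← ENNReal.rpow_mul, one_div, inv_mul_cancel₀ hnpos.ne', ENNReal.rpow_one,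
      ENNReal.rpow_natCast, ← ENNReal.coe_pow, ENNReal.coe_le_coe] at hpow
    exact_mod_cast hpow
  have hgeom : Tendsto (fun n : ℕ => (c : ℝ) ^ n) atTop (𝓝 0) :=
    tendsto_pow_atTop_nhds_zero_of_lt_one c.coe_nonneg (by exact_mod_cast hc1)
  exact squeeze_zero_norm' hbound hgeom

theorem Module.End.tendsto_pow_apply_nhds_zero {X : Type*} [NormedAddCommGroup X]
    [NormedSpace ℂ X] [FiniteDimensional ℂ X] {A : Module.End ℂ X}
    (hA : ∀ μ ∈ spectrum ℂ A, ‖μ‖ < 1) (x : X) :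
    Tendsto (fun n : ℕ => (A ^ n) x) atTop (𝓝 0) := by
  let toCLM := Module.End.toContinuousLinearMap (𝕜 := ℂ) X
  have hspec : spectrum ℂ (toCLM A) = spectrum ℂ A := AlgEquiv.spectrum_eq toCLM A
  have hpow := tendsto_pow_nhds_zero_of_spectralRadius_lt_one
    (spectralRadius_lt_one_of_forall_norm_lt_one (toCLM A) (hspec ▸ hA))
  refine (((ContinuousLinearMap.apply ℂ X x).continuous.tendsto 0).comp hpow).congr fun n => ?_
  simp only [Function.comp_apply, ContinuousLinearMap.apply_apply, ← map_pow]
  rfl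

theorem hasSum_of_eq_sub_succ {u v : ℕ → ℝ} {l : ℝ} (hu : ∀ n, 0 ≤ u n)
    (huv : ∀ n, u n = v n - v (n + 1)) (hv : Tendsto v atTop (𝓝 l)) :
    HasSum u (v 0 - l) := by
  rw [hasSum_iff_tendsto_nat_of_nonneg hu]
  simp_rw [huv, Finset.sum_range_sub']
  exact tendsto_const_nhds.sub hv

theorem norm_sq_eq_sub_of_inner_add_inner_eq {𝕜 X E : Type*} [RCLike 𝕜]
    [NormedAddCommGroup X] [InnerProductSpace 𝕜 X] [NormedAddCommGroup E]
    [InnerProductSpace 𝕜 E] {A : X → X} {C : X → E} {y : X}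
    (h : inner 𝕜 (A y) (A y) + inner 𝕜 (C y) (C y) = inner 𝕜 y y) :
    ‖C y‖ ^ 2 = ‖y‖ ^ 2 - ‖A y‖ ^ 2 := by
  simp only [inner_self_eq_norm_sq_to_K] at h
  have h' : ‖A y‖ ^ 2 + ‖C y‖ ^ 2 = ‖y‖ ^ 2 := by exact_mod_cast h
  linarith

/-- If `A : X → X` and `C : X → E` satisfy `A* A + C* C = I` (expressed via inner
products, since `E` need not be finite-dimensional) and all eigenvalues of `A` lie
in the open unit disc, then the observability operator `Γ x = (C x, C A x, …)` is an
isometry into `ℓ²(ℕ, E)`: for every `x` the sequence `(‖C (Aⁿ x)‖²)` is summable with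
sum `‖x‖²`. -/
theorem stmt_1
    {X E : Type*}
    [NormedAddCommGroup X] [InnerProductSpace ℂ X] [FiniteDimensional ℂ X]
    [NormedAddCommGroup E] [InnerProductSpace ℂ E]
    (A : X →ₗ[ℂ] X) (C : X →ₗ[ℂ] E)
    (hAC : ∀ x y : X,
      (inner ℂ (A x) (A y) : ℂ) + (inner ℂ (C x) (C y) : ℂ) = (inner ℂ x y : ℂ))
    (hA : ∀ μ ∈ spectrum ℂ A, ‖μ‖ < 1) :
    ∀ x : X, HasSum (fun n : ℕ => ‖C ((A ^ n) x)‖ ^ 2) (‖x‖ ^ 2) := by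
  intro x
  have hstep (n : ℕ) : ‖C ((A ^ n) x)‖ ^ 2 = ‖(A ^ n) x‖ ^ 2 - ‖(A ^ (n + 1)) x‖ ^ 2 := by
    rw [pow_succ' A n, Module.End.mul_apply]
    exact norm_sq_eq_sub_of_inner_add_inner_eq (hAC _ _)
  have hlim := (Module.End.tendsto_pow_apply_nhds_zero hA x).norm.pow 2
  simpa using hasSum_of_eq_sub_succ (fun n => sq_nonneg _) hstep hlim
end

section
/- Let A be an n×n complex matrix and B a p×p complex matrix, each with all eigenvalues in the open unit disc, and let T be an n×p complex matrix. Then the series ∑_{k=0}^{∞} A^k T (Bᴴ)^k is summable, and its sum Ω is the unique n×p complex matrix satisfying the Stein equation Ω = A Ω Bᴴ + T. -/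
/-!
Gelfand's formula turns the spectral hypotheses into geometric decay: `‖Aᵏ‖ ≤ rᵏ` and
`‖(Bᴴ)ᵏ‖ ≤ sᵏ` eventually, with `r, s < 1` (the spectrum of `Bᴴ` is the conjugate of that of `B`).
Hence `∑ ‖Aᵏ‖ ‖(Bᴴ)ᵏ‖` converges, so the series converges absolutely; shifting its index by one
shows that the sum `Ω` solves `Ω = A Ω Bᴴ + T`. The difference `D` of two solutions satisfies
`D = A D Bᴴ = Aᵏ D (Bᴴ)ᵏ` for all `k`, and the right-hand side tends to `0`.
-/

open Filter Topology
open scoped NNReal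

section SpectralRadius

variable {A B : Type*} [NormedRing A] [NormedAlgebra ℂ A] [CompleteSpace A]
  [NormedRing B] [NormedAlgebra ℂ B] [CompleteSpace B]

theorem spectralRadius_lt_one_of_forall_norm_lt_one_s2 {a : A}
    (ha : ∀ μ ∈ spectrum ℂ a, ‖μ‖ < 1) : spectralRadius ℂ a < 1 := by
  obtain hempty | hne := (spectrum ℂ a).eq_empty_or_nonempty
  · simp [spectralRadius, hempty]
  · exact_mod_cast spectrum.spectralRadius_lt_of_forall_lt_of_nonempty hne
      (r := 1) fun μ hμ => mod_cast ha μ hμ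

theorem exists_norm_pow_le_pow_of_spectralRadius_lt_one {a : A} (ha : spectralRadius ℂ a < 1) :
    ∃ r : ℝ≥0, r < 1 ∧ ∀ᶠ k : ℕ in atTop, ‖a ^ k‖ ≤ r ^ k := by
  obtain ⟨r, hρr, hr1⟩ := ENNReal.lt_iff_exists_nnreal_btwn.mp ha
  refine ⟨r, mod_cast hr1, ?_⟩
  filter_upwards
    [(spectrum.pow_nnnorm_pow_one_div_tendsto_nhds_spectralRadius a).eventually_lt_const hρr,
      eventually_gt_atTop 0] with k hk hk0
  rw [one_div, ENNReal.rpow_inv_lt_iff (by positivity), ENNReal.rpow_natCast] at hk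
  exact_mod_cast hk.le

theorem summable_norm_pow_mul_norm_pow_of_spectralRadius_lt_one {a : A} {b : B}
    (ha : spectralRadius ℂ a < 1) (hb : spectralRadius ℂ b < 1) :
    Summable fun k : ℕ => ‖a ^ k‖ * ‖b ^ k‖ := by
  obtain ⟨r, hr1, hra⟩ := exists_norm_pow_le_pow_of_spectralRadius_lt_one ha
  obtain ⟨s, hs1, hsb⟩ := exists_norm_pow_le_pow_of_spectralRadius_lt_one hb
  have hrs : (r * s : ℝ) < 1 := mul_lt_one_of_nonneg_of_lt_one_left r.coe_nonneg hr1 hs1.le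
  refine .of_norm_bounded_eventually_nat (summable_geometric_of_lt_one (by positivity) hrs) ?_
  filter_upwards [hra, hsb] with k hak hbk
  rw [Real.norm_of_nonneg (by positivity), mul_pow]
  exact mul_le_mul hak hbk (norm_nonneg _) (by positivity)

end SpectralRadius

theorem spectralRadius_star {A : Type*} [Ring A] [Algebra ℂ A] [StarRing A] [StarModule ℂ A]
    (a : A) : spectralRadius ℂ (star a) = spectralRadius ℂ a := by
  simp only [spectralRadius, spectrum.map_star, ← Set.image_star, iSup_image, nnnorm_star]

namespace Matrix

variable {α m n : Type*} [Fintype m] [Fintype n] {A : Matrix m m α} {C : Matrix n n α}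

theorem _root_.HasSum.matrix_mul_mul [Semiring α] [TopologicalSpace α] [IsTopologicalSemiring α]
    {f : ℕ → Matrix m n α} {S : Matrix m n α} (hf : HasSum f S) (A : Matrix m m α)
    (C : Matrix n n α) : HasSum (fun k => A * f k * C) (A * S * C) :=
  hf.map ((addMonoidHomMulRight C).comp (addMonoidHomMulLeft A))
    ((continuous_const.matrix_mul continuous_id).matrix_mul continuous_const)

theorem pow_mul_mul_pow_eq_self [Semiring α] [DecidableEq m] [DecidableEq n] {X : Matrix m n α}
    (hX : A * X * C = X) (k : ℕ) : A ^ k * X * C ^ k = X := by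
  induction k with
  | zero => simp
  | succ k ih =>
    calc A ^ (k + 1) * X * C ^ (k + 1) = A ^ k * (A * X * C) * C ^ k := by
          rw [pow_succ A, pow_succ' C]; simp only [Matrix.mul_assoc]
      _ = X := by rw [hX, ih]

attribute [local instance] Matrix.linftyOpNormedAddCommGroup Matrix.linftyOpNormedRing
  Matrix.linftyOpNormedSpace

theorem linfty_opNorm_mul_mul_le [NormedRing α] (A : Matrix m m α) (X : Matrix m n α)
    (C : Matrix n n α) : ‖A * X * C‖ ≤ ‖A‖ * ‖X‖ * ‖C‖ :=
  (linfty_opNorm_mul _ _).trans <| by gcongr; exact linfty_opNorm_mul _ _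

variable [DecidableEq m] [DecidableEq n]

theorem eq_zero_of_mul_mul_eq_self [NormedRing α]
    (h : Tendsto (fun k : ℕ => ‖A ^ k‖ * ‖C ^ k‖) atTop (𝓝 0)) {X : Matrix m n α}
    (hX : A * X * C = X) : X = 0 := by
  have hlim : Tendsto (fun k : ℕ => ‖A ^ k‖ * ‖X‖ * ‖C ^ k‖) atTop (𝓝 0) := by
    simpa [mul_right_comm] using h.mul_const ‖X‖
  refine norm_le_zero_iff.mp (ge_of_tendsto' hlim fun k => ?_)
  simpa only [pow_mul_mul_pow_eq_self hX] using linfty_opNorm_mul_mul_le (A ^ k) X (C ^ k)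

theorem eq_of_eq_mul_mul_add [NormedRing α]
    (h : Tendsto (fun k : ℕ => ‖A ^ k‖ * ‖C ^ k‖) atTop (𝓝 0)) {X Y T : Matrix m n α}
    (hX : X = A * X * C + T) (hY : Y = A * Y * C + T) : X = Y :=
  sub_eq_zero.mp <| eq_zero_of_mul_mul_eq_self h <|
    calc A * (X - Y) * C = (A * X * C + T) - (A * Y * C + T) := by
          rw [Matrix.mul_sub, Matrix.sub_mul]; abel
      _ = X - Y := by rw [← hX, ← hY]

variable [RCLike α]

theorem summable_pow_mul_mul_pow (h : Summable fun k : ℕ => ‖A ^ k‖ * ‖C ^ k‖)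
    (T : Matrix m n α) : Summable fun k : ℕ => A ^ k * T * C ^ k :=
  .of_norm_bounded (h.mul_left ‖T‖) fun k =>
    (linfty_opNorm_mul_mul_le _ _ _).trans_eq (by ring)

theorem tsum_pow_mul_mul_pow_eq (h : Summable fun k : ℕ => ‖A ^ k‖ * ‖C ^ k‖)
    (T : Matrix m n α) :
    ∑' k : ℕ, A ^ k * T * C ^ k = A * (∑' k : ℕ, A ^ k * T * C ^ k) * C + T := by
  have hsum := (summable_pow_mul_mul_pow h T).hasSum
  have hshift : HasSum (fun k : ℕ => A ^ (k + 1) * T * C ^ (k + 1))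
      (A * (∑' k : ℕ, A ^ k * T * C ^ k) * C) := by
    simpa only [pow_succ' A, pow_succ C, Matrix.mul_assoc] using hsum.matrix_mul_mul A C
  simpa using hsum.unique ((hasSum_nat_add_iff 1).mp hshift)

end Matrix

open Matrix

attribute [local instance] Matrix.linftyOpNormedAddCommGroup Matrix.linftyOpNormedRing
  Matrix.linftyOpNormedAlgebra

/-- If all eigenvalues of `A` and of `B` lie in the open unit disc, the series
`∑ₖ Aᵏ T (Bᴴ)ᵏ` converges, and its sum `Ω` is the unique solution of the Stein
equation `Ω = A Ω Bᴴ + T`. -/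
theorem stmt_2 {n p : ℕ}
    (A : Matrix (Fin n) (Fin n) ℂ) (B : Matrix (Fin p) (Fin p) ℂ)
    (T : Matrix (Fin n) (Fin p) ℂ)
    (hA : ∀ μ ∈ spectrum ℂ A, ‖μ‖ < 1)
    (hB : ∀ μ ∈ spectrum ℂ B, ‖μ‖ < 1) :
    ∃ Ω : Matrix (Fin n) (Fin p) ℂ,
      HasSum (fun k : ℕ => A ^ k * T * Bᴴ ^ k) Ω ∧
      Ω = A * Ω * Bᴴ + T ∧
      ∀ Ω' : Matrix (Fin n) (Fin p) ℂ, Ω' = A * Ω' * Bᴴ + T → Ω' = Ω := by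
  have hρB : spectralRadius ℂ Bᴴ < 1 := by
    rw [← star_eq_conjTranspose, spectralRadius_star]
    exact spectralRadius_lt_one_of_forall_norm_lt_one_s2 hB
  have h := summable_norm_pow_mul_norm_pow_of_spectralRadius_lt_one
    (spectralRadius_lt_one_of_forall_norm_lt_one_s2 hA) hρB
  have hΩ := tsum_pow_mul_mul_pow_eq h T
  exact ⟨_, (summable_pow_mul_mul_pow h T).hasSum, hΩ,
    fun Ω' hΩ' => eq_of_eq_mul_mul_add h.tendsto_atTop_zero hΩ' hΩ⟩
end

section
/- Let (A, B, C, D) be a stable unitary realization with state dimension n and input/output dimension m. Then for every z ∈ ℂ with |z| = 1, the matrix I − z·A is invertible and the m×m matrix Θ(z) = D + z·C (I − z·A)⁻¹ B is unitary. -/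
/-!
The spectrum of `A` lies in the open unit disc and `|z⁻¹| = 1`, so `1 - z • A` is invertible.
With `F = (1 - z • A)⁻¹` the identity `z • A * F = F - 1` shows that the systems matrix `U`
maps the block column `[z • F B; 1]` to `[F B; Θ(z)]`. As `U` is an isometry the two columns
have the same Gram matrix, and since `|z| = 1` this reads
`(F B)ᴴ (F B) + 1 = (F B)ᴴ (F B) + Θ(z)ᴴ Θ(z)`.
-/

open Matrix

theorem isUnit_one_sub_smul_of_spectrum_norm_lt_one {𝕜 R : Type*} [NormedField 𝕜] [Ring R]
    [Algebra 𝕜 R] {a : R} (ha : ∀ μ ∈ spectrum 𝕜 a, ‖μ‖ < 1) {z : 𝕜} (hz : ‖z‖ ≤ 1) :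
    IsUnit (1 - z • a) := by
  rcases eq_or_ne z 0 with rfl | hz0
  · simp
  have hinv : z⁻¹ ∉ spectrum 𝕜 a := fun hμ => by
    have := ha _ hμ
    rw [norm_inv, inv_lt_one₀ (norm_pos_iff.mpr hz0)] at this
    exact this.not_ge hz
  have hfactor : 1 - z • a = Units.mk0 z hz0 • (algebraMap 𝕜 R z⁻¹ - a) := by
    rw [Units.smul_def, Units.val_mk0, smul_sub, Algebra.algebraMap_eq_smul_one, smul_smul,
      mul_inv_cancel₀ hz0, one_smul]
  rw [hfactor]
  exact (spectrum.notMem_iff.mp hinv).smul _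

theorem conjTranspose_fromRows_mul_fromRows {R m₁ m₂ n : Type*} [Fintype m₁] [Fintype m₂]
    [Semiring R] [StarRing R] (X : Matrix m₁ n R) (Y : Matrix m₂ n R) :
    (fromRows X Y)ᴴ * fromRows X Y = Xᴴ * X + Yᴴ * Y := by
  rw [conjTranspose_fromRows_eq_fromCols_conjTranspose, fromCols_mul_fromRows]

section Realization

variable {R n m : Type*} [Fintype n] [DecidableEq n] [Fintype m] [DecidableEq m] [CommRing R]
  {A : Matrix n n R} {B : Matrix n m R} {C : Matrix m n R} {D : Matrix m m R} {z : R}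
  {F : Matrix n n R}

theorem fromBlocks_mul_fromRows_resolvent (hF : (1 - z • A) * F = 1) :
    fromBlocks A B C D * fromRows (z • (F * B)) (1 : Matrix m m R) =
      fromRows (F * B) (D + z • (C * F * B)) := by
  have hAF : z • A * F = F - 1 := by
    rw [Matrix.sub_mul, Matrix.one_mul] at hF
    rw [← hF, sub_sub_cancel]
  rw [fromBlocks_mul_fromRows]
  congr 1
  · rw [Matrix.mul_smul, ← Matrix.smul_mul, ← Matrix.mul_assoc, hAF, Matrix.sub_mul,
      Matrix.one_mul, Matrix.mul_one, sub_add_cancel]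
  · rw [Matrix.mul_smul, Matrix.mul_one, ← Matrix.mul_assoc, add_comm]

theorem transfer_mem_unitaryGroup [StarRing R]
    (hU : fromBlocks A B C D ∈ unitaryGroup (n ⊕ m) R) (hz : star z * z = 1)
    (hF : (1 - z • A) * F = 1) :
    D + z • (C * F * B) ∈ unitaryGroup m R := by
  set Θ := D + z • (C * F * B)
  have hisometry : (fromRows (z • (F * B)) (1 : Matrix m m R))ᴴ *
        fromRows (z • (F * B)) (1 : Matrix m m R)
      = (fromRows (F * B) Θ)ᴴ * fromRows (F * B) Θ := by
    rw [← fromBlocks_mul_fromRows_resolvent hF, conjTranspose_mul, Matrix.mul_assoc,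
      ← Matrix.mul_assoc _ (fromBlocks A B C D), ← star_eq_conjTranspose,
      (mem_unitaryGroup_iff').mp hU, Matrix.one_mul]
  rw [conjTranspose_fromRows_mul_fromRows, conjTranspose_fromRows_mul_fromRows,
    conjTranspose_smul, Matrix.smul_mul, Matrix.mul_smul, smul_smul, hz, one_smul,
    conjTranspose_one, Matrix.one_mul] at hisometry
  exact (mem_unitaryGroup_iff').mpr (add_left_cancel hisometry).symm

/-- If `(A, B, C, D)` is a stable unitary realization, then for every `z` on the
unit circle the matrix `I - z•A` is invertible and `Θ(z) = D + z C (I - z A)⁻¹ B`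
is unitary. -/
theorem stmt_4 {n m : ℕ}
    (A : Matrix (Fin n) (Fin n) ℂ) (B : Matrix (Fin n) (Fin m) ℂ)
    (C : Matrix (Fin m) (Fin n) ℂ) (D : Matrix (Fin m) (Fin m) ℂ)
    (h_unitary : fromBlocks A B C D ∈ Matrix.unitaryGroup (Fin n ⊕ Fin m) ℂ)
    (h_stable : ∀ μ ∈ spectrum ℂ A, ‖μ‖ < 1)
    (z : ℂ) (hz : ‖z‖ = 1) :
    IsUnit (1 - z • A) ∧
      D + z • (C * (1 - z • A)⁻¹ * B) ∈ Matrix.unitaryGroup (Fin m) ℂ := by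
  have hinvertible := isUnit_one_sub_smul_of_spectrum_norm_lt_one h_stable hz.le
  have hz_unitary : star z * z = 1 := by
    rw [Complex.star_def, Complex.conj_mul', hz]
    norm_num
  exact ⟨hinvertible, transfer_mem_unitaryGroup h_unitary hz_unitary
    (mul_nonsing_inv _ ((isUnit_iff_isUnit_det _).mp hinvertible))⟩
end Realization
end

section
/- Let A, B, C, D be complex matrices of sizes n×n, n×m, m×n and m×m respectively, such that the (n+m)×(n+m) block systems matrix [[A, B], [C, D]] is unitary. Then for every z ∈ ℂ with |z| < 1, the matrix I − z·A is invertible and the m×m matrix Θ(z) = D + z·C (I − z·A)⁻¹ B is a contraction, i.e. I − Θ(z)ᴴ Θ(z) is positive semidefinite. -/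
/-!
`Θ(z)` is the transfer function of the unitary colligation `U = [[A, B], [C, D]]`: for
`G = (1 - z A)⁻¹ B`, the matrix `U` maps the column `[z G; 1]` to `[G; Θ(z)]`. Since `U` is
unitary, the Gram matrices agree, `|z|² GᴴG + 1 = GᴴG + Θ(z)ᴴΘ(z)`, so
`1 - Θ(z)ᴴΘ(z) = (1 - |z|²) GᴴG` is positive semidefinite. Invertibility of `1 - z A` comes from
`1 - AᴴA = CᴴC ≥ 0`: a fixed vector `v = z A v` would satisfy `‖A v‖ ≤ ‖v‖ = |z| ‖A v‖`.
-/

open Matrix ComplexOrder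

namespace Matrix

section Colligation

variable {n m p R : Type*} [Fintype n] [Fintype m] [DecidableEq n] [DecidableEq m]
  [CommRing R] [StarRing R] {A : Matrix n n R} {B : Matrix n m R} {C : Matrix m n R}
  {D : Matrix m m R}

theorem conjTranspose_mul_self_add_of_fromBlocks_mem_unitaryGroup
    (hU : fromBlocks A B C D ∈ unitaryGroup (n ⊕ m) R) (X : Matrix n p R) (Y : Matrix m p R) :
    (A * X + B * Y)ᴴ * (A * X + B * Y) + (C * X + D * Y)ᴴ * (C * X + D * Y) =
      Xᴴ * X + Yᴴ * Y := by
  have h : (fromBlocks A B C D * fromRows X Y)ᴴ * (fromBlocks A B C D * fromRows X Y) =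
      (fromRows X Y)ᴴ * fromRows X Y := by
    rw [conjTranspose_mul, Matrix.mul_assoc, ← Matrix.mul_assoc (fromBlocks A B C D)ᴴ,
      ← star_eq_conjTranspose, Unitary.star_mul_self_of_mem hU, Matrix.one_mul]
  simpa only [fromBlocks_mul_fromRows, conjTranspose_fromRows_eq_fromCols_conjTranspose,
    fromCols_mul_fromRows] using h

theorem one_sub_conjTranspose_mul_self_eq_of_fromBlocks_mem_unitaryGroup
    (hU : fromBlocks A B C D ∈ unitaryGroup (n ⊕ m) R) : 1 - Aᴴ * A = Cᴴ * C := by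
  have h := conjTranspose_mul_self_add_of_fromBlocks_mem_unitaryGroup hU 1 (0 : Matrix m n R)
  simp only [Matrix.mul_one, Matrix.mul_zero, add_zero, conjTranspose_zero, conjTranspose_one] at h
  rw [← h, add_sub_cancel_left]

theorem one_sub_conjTranspose_mul_self_transfer_eq
    (hU : fromBlocks A B C D ∈ unitaryGroup (n ⊕ m) R) {z : R} {G : Matrix n m R}
    (hG : (1 - z • A) * G = B) :
    1 - (D + z • (C * G))ᴴ * (D + z • (C * G)) = (1 - star z * z) • (Gᴴ * G) := by
  have h := conjTranspose_mul_self_add_of_fromBlocks_mem_unitaryGroup hU (z • G) 1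
  have hstate : A * (z • G) + B = G := by
    rw [← hG, Matrix.sub_mul, Matrix.one_mul, Matrix.smul_mul, Matrix.mul_smul]
    abel
  rw [Matrix.mul_one, Matrix.mul_one, hstate, Matrix.mul_smul, add_comm _ D, conjTranspose_smul,
    conjTranspose_one, Matrix.one_mul, Matrix.smul_mul, Matrix.mul_smul, smul_smul] at h
  rw [eq_sub_of_add_eq' h, sub_smul, one_smul]
  abel

end Colligation

section RCLike

variable {n 𝕜 : Type*} [Fintype n] [RCLike 𝕜]

theorem star_mul_self_lt_one {z : 𝕜} (hz : ‖z‖ < 1) : star z * z < 1 := by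
  rw [RCLike.star_def, RCLike.conj_mul]
  exact_mod_cast (sq_lt_one_iff₀ (norm_nonneg z)).mpr hz

theorem isUnit_one_sub_smul_of_posSemidef [DecidableEq n] {A : Matrix n n 𝕜}
    (hA : (1 - Aᴴ * A).PosSemidef) {z : 𝕜} (hz : ‖z‖ < 1) : IsUnit (1 - z • A) := by
  rw [isUnit_iff_isUnit_det, isUnit_iff_ne_zero, Ne, ← exists_mulVec_eq_zero_iff]
  rintro ⟨v, hv0, hv⟩
  have hfix : v = z • A *ᵥ v := by
    rwa [sub_mulVec, one_mulVec, smul_mulVec, sub_eq_zero] at hv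
  have hAv : A *ᵥ v ≠ 0 := fun h ↦ hv0 (by rw [hfix, h, smul_zero])
  have hcontr : star (A *ᵥ v) ⬝ᵥ A *ᵥ v ≤ star v ⬝ᵥ v := by
    have := hA.dotProduct_mulVec_nonneg v
    rwa [sub_mulVec, one_mulVec, dotProduct_sub, ← mulVec_mulVec, dotProduct_mulVec,
      ← star_mulVec, sub_nonneg] at this
  have hscale : star v ⬝ᵥ v = star z * z * (star (A *ᵥ v) ⬝ᵥ A *ᵥ v) := by
    conv_lhs => rw [hfix]
    rw [star_smul, smul_dotProduct, dotProduct_smul, smul_eq_mul, smul_eq_mul]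
    ring
  have hpos : 0 < (1 - star z * z) * (star (A *ᵥ v) ⬝ᵥ A *ᵥ v) :=
    mul_pos (sub_pos.mpr (star_mul_self_lt_one hz)) (dotProduct_star_self_pos_iff.mpr hAv)
  rw [sub_mul, one_mul, ← hscale] at hpos
  exact (sub_pos.mp hpos).not_ge hcontr

end RCLike

end Matrix

/-- If the systems matrix `[[A, B], [C, D]]` is unitary, then for every `z` in the
open unit disc the matrix `I - z•A` is invertible and `Θ(z) = D + z C (I - z A)⁻¹ B`
is a contraction: `I - Θ(z)ᴴ Θ(z)` is positive semidefinite. -/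
theorem stmt_5 {n m : ℕ}
    (A : Matrix (Fin n) (Fin n) ℂ) (B : Matrix (Fin n) (Fin m) ℂ)
    (C : Matrix (Fin m) (Fin n) ℂ) (D : Matrix (Fin m) (Fin m) ℂ)
    (h_unitary : fromBlocks A B C D ∈ Matrix.unitaryGroup (Fin n ⊕ Fin m) ℂ)
    (z : ℂ) (hz : ‖z‖ < 1) :
    IsUnit (1 - z • A) ∧
      (1 - (D + z • (C * (1 - z • A)⁻¹ * B))ᴴ *
        (D + z • (C * (1 - z • A)⁻¹ * B))).PosSemidef := by
  have hA : (1 - Aᴴ * A).PosSemidef := by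
    rw [one_sub_conjTranspose_mul_self_eq_of_fromBlocks_mem_unitaryGroup h_unitary]
    exact posSemidef_conjTranspose_mul_self C
  have hunit : IsUnit (1 - z • A) := isUnit_one_sub_smul_of_posSemidef hA hz
  refine ⟨hunit, ?_⟩
  have hG : (1 - z • A) * ((1 - z • A)⁻¹ * B) = B :=
    mul_nonsing_inv_cancel_left _ B ((isUnit_iff_isUnit_det _).mp hunit)
  rw [Matrix.mul_assoc C, one_sub_conjTranspose_mul_self_transfer_eq h_unitary hG]
  exact (posSemidef_conjTranspose_mul_self _).smul (sub_nonneg.mpr (star_mul_self_lt_one hz).le)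
end

section
/- Let (A_v, B_v, C_v, D_v) be a stable unitary realization with state dimension n_v and input/output dimension m, and let (A_w, B_w, C_w, D_w) be a stable unitary realization with state dimension n_w and the same input/output dimension m. Let X be the unique n_v×n_w matrix satisfying the Stein equation X = A_v X A_wᴴ + B_v B_wᴴ, and set C∘ = D_v B_wᴴ + C_v X A_wᴴ. Then I − Xᴴ X satisfies the Stein equation (I − Xᴴ X) = A_w (I − Xᴴ X) A_wᴴ + C∘ᴴ C∘; consequently Q = I − Xᴴ X, where Q denotes the unique solution of Q = A_w Q A_wᴴ + C∘ᴴ C∘. -/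
open Matrix Filter
open scoped ENNReal NNReal

attribute [local instance] Matrix.linftyOpNormedRing Matrix.linftyOpNormedAlgebra

lemma aux_exists_pow_norm_lt_one {n : ℕ} [NeZero n] (A : Matrix (Fin n) (Fin n) ℂ)
    (h : ∀ μ ∈ spectrum ℂ A, ‖μ‖ < 1) : ∃ k : ℕ, 0 < k ∧ ‖A ^ k‖ < 1 := by
  have hr : spectralRadius ℂ A < 1 := by
    have := spectrum.spectralRadius_lt_of_forall_lt A (r := 1)
      (fun z hz => by exact_mod_cast h z hz)
    simpa using this
  have hG := spectrum.pow_nnnorm_pow_one_div_tendsto_nhds_spectralRadius A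
  have hev : ∀ᶠ k : ℕ in atTop, (‖A ^ k‖₊ : ℝ≥0∞) ^ (1 / (k : ℝ)) < 1 :=
    hG.eventually_lt_const hr
  obtain ⟨k, hk1, hk⟩ := ((eventually_ge_atTop 1).and hev).exists
  refine ⟨k, hk1, ?_⟩
  by_contra hc
  push_neg at hc
  have h1 : (1 : ℝ≥0∞) ≤ (‖A ^ k‖₊ : ℝ≥0∞) := by
    exact_mod_cast (by exact_mod_cast hc : (1 : ℝ≥0) ≤ ‖A ^ k‖₊)
  have : (1 : ℝ≥0∞) ≤ (‖A ^ k‖₊ : ℝ≥0∞) ^ (1 / (k : ℝ)) := by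
    calc (1 : ℝ≥0∞) = 1 ^ (1 / (k : ℝ)) := by rw [ENNReal.one_rpow]
    _ ≤ _ := ENNReal.rpow_le_rpow h1 (by positivity)
  exact absurd hk (not_lt.mpr this)

set_option maxHeartbeats 1000000 in
lemma aux_stein_zero {n : ℕ} (A : Matrix (Fin n) (Fin n) ℂ)
    (h : ∀ μ ∈ spectrum ℂ A, ‖μ‖ < 1)
    (E : Matrix (Fin n) (Fin n) ℂ) (hE : E = A * E * Aᴴ) : E = 0 := by
  rcases Nat.eq_zero_or_pos n with hn | hn
  · subst hn; exact Subsingleton.elim _ _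
  have : NeZero n := ⟨hn.ne'⟩
  have hstar : ∀ μ ∈ spectrum ℂ Aᴴ, ‖μ‖ < 1 := by
    intro μ hμ
    have hst : star μ ∈ spectrum ℂ A := by
      rw [← Matrix.star_eq_conjTranspose, spectrum.map_star, Set.mem_star] at hμ
      exact hμ
    have := h _ hst
    simpa using this
  obtain ⟨ka, hka, hA⟩ := aux_exists_pow_norm_lt_one A h
  obtain ⟨kb, hkb, hB⟩ := aux_exists_pow_norm_lt_one Aᴴ hstar
  set k := ka * kb with hk
  have hkpos : 0 < k := Nat.mul_pos hka hkb
  have hAk : ‖A ^ k‖ < 1 := by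
    calc ‖A ^ k‖ = ‖(A ^ ka) ^ kb‖ := by rw [← pow_mul]
    _ ≤ ‖A ^ ka‖ ^ kb := norm_pow_le' _ hkb
    _ < 1 := pow_lt_one₀ (norm_nonneg _) hA hkb.ne'
  have hBk : ‖Aᴴ ^ k‖ < 1 := by
    calc ‖Aᴴ ^ k‖ = ‖(Aᴴ ^ kb) ^ ka‖ := by rw [← pow_mul, Nat.mul_comm]
    _ ≤ ‖Aᴴ ^ kb‖ ^ ka := norm_pow_le' _ hka
    _ < 1 := pow_lt_one₀ (norm_nonneg _) hB hka.ne'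
  -- iterate the Stein recursion
  have hiter : ∀ j : ℕ, E = A ^ j * E * Aᴴ ^ j := by
    intro j
    induction j with
    | zero => simp
    | succ j ih =>
      calc E = A * E * Aᴴ := hE
      _ = A * (A ^ j * E * Aᴴ ^ j) * Aᴴ := by rw [← ih]
      _ = A ^ (j + 1) * E * Aᴴ ^ (j + 1) := by
          rw [pow_succ' A j, pow_succ Aᴴ j]
          simp only [mul_assoc]
  set r := ‖A ^ k‖ with hrdef
  set s := ‖Aᴴ ^ k‖ with hsdef
  have hbound : ∀ j : ℕ, ‖E‖ ≤ (r * s) ^ j * ‖E‖ := by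
    intro j
    rcases Nat.eq_zero_or_pos j with hj | hj
    · simp [hj]
    calc ‖E‖ = ‖A ^ (k * j) * E * Aᴴ ^ (k * j)‖ := by rw [← hiter]
    _ ≤ ‖A ^ (k * j) * E‖ * ‖Aᴴ ^ (k * j)‖ := norm_mul_le _ _
    _ ≤ ‖A ^ (k * j)‖ * ‖E‖ * ‖Aᴴ ^ (k * j)‖ :=
        mul_le_mul_of_nonneg_right (norm_mul_le _ _) (norm_nonneg _)
    _ ≤ r ^ j * ‖E‖ * s ^ j := by
        have h1 : ‖A ^ (k * j)‖ ≤ r ^ j := by rw [pow_mul]; exact norm_pow_le' _ hj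
        have h2 : ‖Aᴴ ^ (k * j)‖ ≤ s ^ j := by rw [pow_mul]; exact norm_pow_le' _ hj
        have hr0 : (0:ℝ) ≤ r ^ j := by positivity
        exact mul_le_mul (mul_le_mul_of_nonneg_right h1 (norm_nonneg _)) h2
          (norm_nonneg _) (by positivity)
    _ = (r * s) ^ j * ‖E‖ := by ring
  have hrs : r * s < 1 := by
    have hr0 : 0 ≤ r := norm_nonneg _
    have hs0 : 0 ≤ s := norm_nonneg _
    calc r * s ≤ 1 * s := mul_le_mul_of_nonneg_right hAk.le hs0
    _ = s := one_mul s
    _ < 1 := hBk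
  have hlim : Tendsto (fun j : ℕ => (r * s) ^ j * ‖E‖) atTop (nhds 0) := by
    have := tendsto_pow_atTop_nhds_zero_of_lt_one (by positivity) hrs
    simpa using this.mul_const ‖E‖
  have : ‖E‖ ≤ 0 := ge_of_tendsto' hlim hbound
  simpa using norm_le_zero_iff.mp this

lemma aux_comb {a b c d e f : ℕ} (K : Matrix (Fin a) (Fin b) ℂ) (K' : Matrix (Fin a) (Fin d) ℂ)
    (L : Matrix (Fin c) (Fin b) ℂ) (L' : Matrix (Fin c) (Fin d) ℂ)
    (U : Matrix (Fin b) (Fin e) ℂ) (V : Matrix (Fin d) (Fin f) ℂ) :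
    (K * U)ᴴ * (K' * V) + (L * U)ᴴ * (L' * V) = Uᴴ * (Kᴴ * K' + Lᴴ * L') * V := by
  simp only [conjTranspose_mul, Matrix.mul_add, Matrix.add_mul, Matrix.mul_assoc]

/-- If `X` solves the Stein equation `X = A_v X A_wᴴ + B_v B_wᴴ` coming from two
stable unitary realizations, and `C∘ = D_v B_wᴴ + C_v X A_wᴴ`, then `I - Xᴴ X`
solves the Stein equation `S = A_w S A_wᴴ + C∘ᴴ C∘`; consequently its unique
solution `Q` equals `I - Xᴴ X`. -/
theorem stmt_6 {nv nw m : ℕ}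
    (Av : Matrix (Fin nv) (Fin nv) ℂ) (Bv : Matrix (Fin nv) (Fin m) ℂ)
    (Cv : Matrix (Fin m) (Fin nv) ℂ) (Dv : Matrix (Fin m) (Fin m) ℂ)
    (Aw : Matrix (Fin nw) (Fin nw) ℂ) (Bw : Matrix (Fin nw) (Fin m) ℂ)
    (Cw : Matrix (Fin m) (Fin nw) ℂ) (Dw : Matrix (Fin m) (Fin m) ℂ)
    (hv_unitary : fromBlocks Av Bv Cv Dv ∈ Matrix.unitaryGroup (Fin nv ⊕ Fin m) ℂ)
    (hv_stable : ∀ μ ∈ spectrum ℂ Av, ‖μ‖ < 1)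
    (hw_unitary : fromBlocks Aw Bw Cw Dw ∈ Matrix.unitaryGroup (Fin nw ⊕ Fin m) ℂ)
    (hw_stable : ∀ μ ∈ spectrum ℂ Aw, ‖μ‖ < 1)
    (X : Matrix (Fin nv) (Fin nw) ℂ)
    (hX : X = Av * X * Awᴴ + Bv * Bwᴴ)
    (Co : Matrix (Fin m) (Fin nw) ℂ)
    (hCo : Co = Dv * Bwᴴ + Cv * X * Awᴴ) :
    (1 - Xᴴ * X) = Aw * (1 - Xᴴ * X) * Awᴴ + Coᴴ * Co ∧
      ∀ Q : Matrix (Fin nw) (Fin nw) ℂ,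
        Q = Aw * Q * Awᴴ + Coᴴ * Co → Q = 1 - Xᴴ * X := by
  -- block identities from unitarity
  have hv1 : fromBlocks (Avᴴ * Av + Cvᴴ * Cv) (Avᴴ * Bv + Cvᴴ * Dv)
      (Bvᴴ * Av + Dvᴴ * Cv) (Bvᴴ * Bv + Dvᴴ * Dv) = fromBlocks 1 0 0 1 := by
    rw [← fromBlocks_multiply, ← fromBlocks_conjTranspose, fromBlocks_one,
      ← Matrix.star_eq_conjTranspose]
    exact hv_unitary.1
  have hw2 : fromBlocks (Aw * Awᴴ + Bw * Bwᴴ) (Aw * Cwᴴ + Bw * Dwᴴ)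
      (Cw * Awᴴ + Dw * Bwᴴ) (Cw * Cwᴴ + Dw * Dwᴴ) = fromBlocks 1 0 0 1 := by
    rw [← fromBlocks_multiply, ← fromBlocks_conjTranspose, fromBlocks_one,
      ← Matrix.star_eq_conjTranspose]
    exact hw_unitary.2
  have E1 : Avᴴ * Av + Cvᴴ * Cv = 1 := by
    simpa only [Matrix.toBlocks_fromBlocks₁₁] using congrArg Matrix.toBlocks₁₁ hv1
  have E2 : Avᴴ * Bv + Cvᴴ * Dv = 0 := by
    simpa only [Matrix.toBlocks_fromBlocks₁₂] using congrArg Matrix.toBlocks₁₂ hv1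
  have E3 : Bvᴴ * Av + Dvᴴ * Cv = 0 := by
    simpa only [Matrix.toBlocks_fromBlocks₂₁] using congrArg Matrix.toBlocks₂₁ hv1
  have E4 : Bvᴴ * Bv + Dvᴴ * Dv = 1 := by
    simpa only [Matrix.toBlocks_fromBlocks₂₂] using congrArg Matrix.toBlocks₂₂ hv1
  have W1 : Aw * Awᴴ + Bw * Bwᴴ = 1 := by
    simpa only [Matrix.toBlocks_fromBlocks₁₁] using congrArg Matrix.toBlocks₁₁ hw2
  have hX' : X = Av * (X * Awᴴ) + Bv * Bwᴴ := by
    conv_lhs => rw [hX]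
    rw [Matrix.mul_assoc]
  have hCo' : Co = Cv * (X * Awᴴ) + Dv * Bwᴴ := by
    conv_lhs => rw [hCo]
    rw [Matrix.mul_assoc, add_comm]
  have hsum : Xᴴ * X + Coᴴ * Co = Aw * (Xᴴ * X) * Awᴴ + Bw * Bwᴴ := by
    calc Xᴴ * X + Coᴴ * Co
        = (Av * (X * Awᴴ) + Bv * Bwᴴ)ᴴ * (Av * (X * Awᴴ) + Bv * Bwᴴ)
          + (Cv * (X * Awᴴ) + Dv * Bwᴴ)ᴴ * (Cv * (X * Awᴴ) + Dv * Bwᴴ) := by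
              rw [← hX', ← hCo']
      _ = ((Av * (X * Awᴴ))ᴴ * (Av * (X * Awᴴ)) + (Cv * (X * Awᴴ))ᴴ * (Cv * (X * Awᴴ)))
          + ((Av * (X * Awᴴ))ᴴ * (Bv * Bwᴴ) + (Cv * (X * Awᴴ))ᴴ * (Dv * Bwᴴ))
          + ((Bv * Bwᴴ)ᴴ * (Av * (X * Awᴴ)) + (Dv * Bwᴴ)ᴴ * (Cv * (X * Awᴴ)))
          + ((Bv * Bwᴴ)ᴴ * (Bv * Bwᴴ) + (Dv * Bwᴴ)ᴴ * (Dv * Bwᴴ)) := by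
        simp only [conjTranspose_add, Matrix.add_mul, Matrix.mul_add]
        abel
      _ = (X * Awᴴ)ᴴ * (Avᴴ * Av + Cvᴴ * Cv) * (X * Awᴴ)
          + (X * Awᴴ)ᴴ * (Avᴴ * Bv + Cvᴴ * Dv) * Bwᴴ
          + (Bwᴴ)ᴴ * (Bvᴴ * Av + Dvᴴ * Cv) * (X * Awᴴ)
          + (Bwᴴ)ᴴ * (Bvᴴ * Bv + Dvᴴ * Dv) * Bwᴴ := by
        rw [aux_comb, aux_comb, aux_comb, aux_comb]
      _ = Aw * (Xᴴ * X) * Awᴴ + Bw * Bwᴴ := by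
        rw [E1, E2, E3, E4]
        simp [Matrix.mul_one, Matrix.mul_zero, Matrix.zero_mul, conjTranspose_mul,
          conjTranspose_conjTranspose, Matrix.mul_assoc]
  have hCoCo : Coᴴ * Co = Aw * (Xᴴ * X) * Awᴴ + Bw * Bwᴴ - Xᴴ * X :=
    eq_sub_of_add_eq' hsum
  have hfirst : (1 - Xᴴ * X) = Aw * (1 - Xᴴ * X) * Awᴴ + Coᴴ * Co := by
    have hexp : Aw * (1 - Xᴴ * X) * Awᴴ = Aw * Awᴴ - Aw * (Xᴴ * X) * Awᴴ := by
      rw [Matrix.mul_sub, Matrix.mul_one, Matrix.sub_mul]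
    rw [hexp, hCoCo, ← W1]
    abel
  refine ⟨hfirst, fun Q hQ => ?_⟩
  have hE : Q - (1 - Xᴴ * X) = Aw * (Q - (1 - Xᴴ * X)) * Awᴴ := by
    calc Q - (1 - Xᴴ * X)
        = (Aw * Q * Awᴴ + Coᴴ * Co) - (Aw * (1 - Xᴴ * X) * Awᴴ + Coᴴ * Co) := by
            rw [← hQ, ← hfirst]
      _ = Aw * Q * Awᴴ - Aw * (1 - Xᴴ * X) * Awᴴ := by abel
      _ = Aw * (Q - (1 - Xᴴ * X)) * Awᴴ := by
            simp [Matrix.mul_sub, Matrix.sub_mul, Matrix.mul_one]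
  have := aux_stein_zero Aw hw_stable _ hE
  rwa [sub_eq_zero] at this
end

section
/- Let A_w be an n_w×n_w and B_w an n_w×m complex matrix, let A_v be an n_v×n_v and B_v an n_v×m complex matrix, and let X be an n_v×n_w matrix satisfying the Stein equation X = A_v X A_wᴴ + B_v B_wᴴ. Let k ≥ 1 be an integer and x ∈ ℂ^{n_w} a vector such that B_wᴴ (A_wᴴ)^j x = 0 for every j with 0 ≤ j ≤ k−1. Then X (A_wᴴ)^j x = A_v^{k−j} X (A_wᴴ)^k x for every j with 0 ≤ j ≤ k; in particular, if X (A_wᴴ)^k x = 0, then X (A_wᴴ)^j x = 0 for all 0 ≤ j ≤ k. -/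
open Matrix

/-- If `X` solves the Stein equation `X = A_v X A_wᴴ + B_v B_wᴴ` and
`B_wᴴ (A_wᴴ)ʲ x = 0` for all `j < k`, then `X (A_wᴴ)ʲ x = A_v^{k-j} X (A_wᴴ)ᵏ x`
for all `j ≤ k`; in particular `X (A_wᴴ)ᵏ x = 0` forces `X (A_wᴴ)ʲ x = 0` for all
`j ≤ k`. -/
theorem stmt_8 {nv nw m : ℕ}
    (Aw : Matrix (Fin nw) (Fin nw) ℂ) (Bw : Matrix (Fin nw) (Fin m) ℂ)
    (Av : Matrix (Fin nv) (Fin nv) ℂ) (Bv : Matrix (Fin nv) (Fin m) ℂ)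
    (X : Matrix (Fin nv) (Fin nw) ℂ)
    (hX : X = Av * X * Awᴴ + Bv * Bwᴴ)
    (k : ℕ) (hk : 1 ≤ k) (x : Fin nw → ℂ)
    (hx : ∀ j < k, Bwᴴ *ᵥ (Awᴴ ^ j *ᵥ x) = 0) :
    (∀ j ≤ k, X *ᵥ (Awᴴ ^ j *ᵥ x) = Av ^ (k - j) *ᵥ (X *ᵥ (Awᴴ ^ k *ᵥ x))) ∧
      (X *ᵥ (Awᴴ ^ k *ᵥ x) = 0 → ∀ j ≤ k, X *ᵥ (Awᴴ ^ j *ᵥ x) = 0) := by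
  have main : ∀ d j, j + d = k →
      X *ᵥ (Awᴴ ^ j *ᵥ x) = Av ^ (k - j) *ᵥ (X *ᵥ (Awᴴ ^ k *ᵥ x)) := by
    intro d
    induction d with
    | zero =>
      intro j hj
      simp at hj
      subst hj
      simp [one_mulVec]
    | succ d ih =>
      intro j hj
      have hjk : j < k := by omega
      have h1 : X *ᵥ (Awᴴ ^ j *ᵥ x) = Av *ᵥ (X *ᵥ (Awᴴ ^ (j + 1) *ᵥ x)) := by
        conv_lhs => rw [hX]
        simp only [pow_succ', add_mulVec, ← mulVec_mulVec, hx j hjk, mulVec_zero, add_zero]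
      have h2 : k - j = (k - (j + 1)) + 1 := by omega
      rw [h1, ih (j + 1) (by omega), h2, pow_succ', ← mulVec_mulVec]
  refine ⟨fun j hj => main (k - j) j (by omega), fun h0 j hj => ?_⟩
  rw [main (k - j) j (by omega), h0, mulVec_zero]
end

section
/- Let A be an n×n complex matrix such that I − Aᴴ A is positive semidefinite and every eigenvalue of A lies in the open unit disc, and let φ be a finite Blaschke product of degree d with d ≥ n. Then 1 is not an eigenvalue of φ(A)ᴴ φ(A); equivalently, I − φ(A)ᴴ φ(A) is invertible, so the defect index of φ(A) equals n. -/
/-!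
Write `φ(A) = ζ P` with `P = ∏ bₐ(A)`, `bₐ(A) = (A - a)(1 - ā A)⁻¹`, and let `D = 1 - AᴴA ≥ 0`.
Each factor satisfies `1 - bₐᴴ bₐ = (1 - |a|²) qₐ⁻ᴴ D qₐ⁻¹` with `qₐ = 1 - ā A`, so the factors are
commuting contractions and `1 - PᴴP` splits into positive semidefinite pieces, one per factor.
If `(1 - PᴴP) x = 0`, write `x = Q(A) y` with `Q = ∏ (1 - ā X)`; peeling off the factors one at a
time shows `D f(A) y = 0` for all `f` of degree `< d` (after removing the zero `a`, a polynomial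
of degree `≤ m` is a multiple of `∏ (1 - b̄ X)` over the remaining `m` zeros plus `(X - a)` times
one of degree `< m`, as that product does not vanish at `a`), hence, by Cayley–Hamilton and
`n ≤ d`, for all `f`.
The vectors `y` with this property form an `A`-invariant subspace on which `A` is isometric, so an
eigenvector there would have an eigenvalue of modulus one, which stability rules out.
-/

open Matrix ComplexOrder

/-- `φ(A)` for the finite Blaschke product `φ` determined by the unimodular
constant `ζ` and the zeros `α 0, …, α (d-1)` in the open unit disc. -/
noncomputable def blaschkeMatrix {n d : ℕ} (ζ : ℂ) (α : Fin d → ℂ)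
    (A : Matrix (Fin n) (Fin n) ℂ) : Matrix (Fin n) (Fin n) ℂ :=
  ζ • (List.ofFn fun k : Fin d =>
    (A - α k • 1) * (1 - (starRingEnd ℂ) (α k) • A)⁻¹).prod

open Polynomial

theorem Polynomial.exists_eq_smul_add_X_sub_C_mul {K : Type*} [Field K] {p g : K[X]} {a : K}
    {m : ℕ} (hpa : p.eval a ≠ 0) (hp : p.degree ≤ m) (hg : g.degree < ↑(m + 1)) :
    ∃ (k : K) (h : K[X]), h.degree < m ∧ g = k • p + (X - C a) * h := by
  set r := g - (g.eval a / p.eval a) • p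
  have hroot : r.IsRoot a := by simp [r, hpa]
  have hr : r.degree < ↑(m + 1) := by
    refine (degree_sub_le _ _).trans_lt (max_lt hg ?_)
    exact (degree_smul_le _ _).trans_lt (hp.trans_lt (by exact_mod_cast Nat.lt_succ_self m))
  refine ⟨g.eval a / p.eval a, r /ₘ (X - C a), ?_, ?_⟩
  · rw [← mul_divByMonic_eq_iff_isRoot.mpr hroot, degree_mul, degree_X_sub_C] at hr
    generalize (r /ₘ (X - C a)).degree = e at hr ⊢
    induction e using WithBot.recBotCoe with
    | bot => exact WithBot.bot_lt_coe m
    | coe k =>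
      rw [Nat.cast_withBot, ← WithBot.coe_one, ← WithBot.coe_add, WithBot.coe_lt_coe] at hr
      rw [Nat.cast_withBot, WithBot.coe_lt_coe]
      omega
  · rw [mul_divByMonic_eq_iff_isRoot.mpr hroot]
    simp [r]

noncomputable def blaschkeDenom (L : List ℂ) : ℂ[X] :=
  (L.map fun a => 1 - C (starRingEnd ℂ a) * X).prod

theorem blaschkeDenom_cons (a : ℂ) (L : List ℂ) :
    blaschkeDenom (a :: L) = (1 - C (starRingEnd ℂ a) * X) * blaschkeDenom L := by
  rw [blaschkeDenom, List.map_cons, List.prod_cons, blaschkeDenom]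

theorem degree_blaschkeDenom_le (L : List ℂ) : (blaschkeDenom L).degree ≤ L.length := by
  refine degree_le_of_natDegree_le ?_
  induction L with
  | nil => simp [blaschkeDenom]
  | cons a L ih =>
    rw [blaschkeDenom_cons, List.length_cons]
    have : (1 - C (starRingEnd ℂ a) * X).natDegree ≤ 1 := by compute_degree
    exact natDegree_mul_le.trans (by omega)

theorem eval_blaschkeDenom_ne_zero {L : List ℂ} (hL : ∀ a ∈ L, ‖a‖ ≤ 1) {z : ℂ} (hz : ‖z‖ < 1) :
    (blaschkeDenom L).eval z ≠ 0 := by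
  induction L with
  | nil => simp [blaschkeDenom]
  | cons a L ih =>
    rw [blaschkeDenom_cons, eval_mul]
    refine mul_ne_zero (fun h => ?_) (ih fun b hb => hL b (List.mem_cons_of_mem a hb))
    have : ‖starRingEnd ℂ a * z‖ < 1 := by
      rw [norm_mul, RCLike.norm_conj]
      exact mul_lt_one_of_nonneg_of_lt_one_right (hL a List.mem_cons_self) (norm_nonneg z) hz
    simp only [eval_sub, eval_one, eval_mul, eval_C, eval_X, sub_eq_zero] at h
    rw [← h, norm_one] at this
    exact this.false

namespace Matrix

variable {ι : Type*} [Fintype ι]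

theorem PosSemidef.mulVec_eq_zero_of_add_mulVec_eq_zero {M N : Matrix ι ι ℂ} (hM : M.PosSemidef)
    (hN : N.PosSemidef) {x : ι → ℂ} (h : (M + N) *ᵥ x = 0) : M *ᵥ x = 0 ∧ N *ᵥ x = 0 := by
  rw [← hM.dotProduct_mulVec_zero_iff, ← hN.dotProduct_mulVec_zero_iff,
    ← add_eq_zero_iff_of_nonneg (hM.dotProduct_mulVec_nonneg x) (hN.dotProduct_mulVec_nonneg x),
    ← dotProduct_add, ← add_mulVec, h, dotProduct_zero]

theorem PosSemidef.mulVec_mulVec_eq_zero {M : Matrix ι ι ℂ} (hM : M.PosSemidef) (B : Matrix ι ι ℂ)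
    {x : ι → ℂ} (h : (Bᴴ * M * B) *ᵥ x = 0) : M *ᵥ (B *ᵥ x) = 0 := by
  rw [← hM.dotProduct_mulVec_zero_iff, star_mulVec, ← dotProduct_mulVec, mulVec_mulVec,
    mulVec_mulVec, Matrix.mul_assoc, ← Matrix.mul_assoc, h, dotProduct_zero]

variable [DecidableEq ι]

theorem commute_nonsing_inv_right {M N : Matrix ι ι ℂ} (h : Commute M N) : Commute M N⁻¹ := by
  by_cases hN : IsUnit N
  · lift N to (Matrix ι ι ℂ)ˣ using hN
    rw [← coe_units_inv]
    exact h.units_inv_right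
  · rw [nonsing_inv_eq_ringInverse, Ring.inverse_non_unit _ hN]
    exact Commute.zero_right M

theorem isUnit_one_sub_smul {A : Matrix ι ι ℂ} (hA : ∀ μ ∈ spectrum ℂ A, ‖μ‖ < 1) {b : ℂ}
    (hb : ‖b‖ ≤ 1) : IsUnit (1 - b • A) := by
  rcases eq_or_ne b 0 with rfl | hb0
  · simp
  have hinv : b⁻¹ ∉ spectrum ℂ A := fun h => by
    have := hA _ h
    rw [norm_inv] at this
    exact (one_le_inv₀ (norm_pos_iff.mpr hb0)).mpr hb |>.not_gt this
  rw [spectrum.mem_iff, not_not, Algebra.algebraMap_eq_smul_one] at hinv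
  have : 1 - b • A = b • (b⁻¹ • 1 - A) := by
    rw [smul_sub, smul_smul, mul_inv_cancel₀ hb0, one_smul]
  rwa [this, ← Units.smul_mk0 hb0, isUnit_smul_iff]

theorem isUnit_det_one_sub_conj_smul {A : Matrix ι ι ℂ} (hA : ∀ μ ∈ spectrum ℂ A, ‖μ‖ < 1)
    {a : ℂ} (ha : ‖a‖ ≤ 1) : IsUnit (1 - starRingEnd ℂ a • A).det :=
  (isUnit_iff_isUnit_det _).mp (isUnit_one_sub_smul hA (by rwa [RCLike.norm_conj]))

theorem one_sub_conjTranspose_mul_mul_eq (X Y : Matrix ι ι ℂ) :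
    1 - (X * Y)ᴴ * (X * Y) = Yᴴ * (1 - Xᴴ * X) * Y + (1 - Yᴴ * Y) := by
  rw [conjTranspose_mul]
  noncomm_ring

theorem PosSemidef.one_sub_conjTranspose_mul_mul {X Y : Matrix ι ι ℂ}
    (hX : (1 - Xᴴ * X).PosSemidef) (hY : (1 - Yᴴ * Y).PosSemidef) :
    (1 - (X * Y)ᴴ * (X * Y)).PosSemidef := by
  rw [one_sub_conjTranspose_mul_mul_eq]
  exact (hX.conjTranspose_mul_mul_same Y).add hY

theorem PosSemidef.one_sub_conjTranspose_list_prod_mul {L : List (Matrix ι ι ℂ)}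
    (hL : ∀ X ∈ L, (1 - Xᴴ * X).PosSemidef) : (1 - L.prodᴴ * L.prod).PosSemidef := by
  induction L with
  | nil => simpa using PosSemidef.zero
  | cons X L ih =>
    rw [List.prod_cons]
    exact (hL X List.mem_cons_self).one_sub_conjTranspose_mul_mul
      (ih fun Y hY => hL Y (List.mem_cons_of_mem X hY))

noncomputable def blaschkeFactor (A : Matrix ι ι ℂ) (a : ℂ) : Matrix ι ι ℂ :=
  (A - a • 1) * (1 - starRingEnd ℂ a • A)⁻¹

variable {A : Matrix ι ι ℂ}

theorem commute_blaschkeFactor_of_commute {M : Matrix ι ι ℂ} (h : Commute M A) (a : ℂ) :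
    Commute M (blaschkeFactor A a) :=
  (h.sub_right ((Commute.one_right M).smul_right a)).mul_right
    (commute_nonsing_inv_right ((Commute.one_right M).sub_right (h.smul_right _)))

theorem commute_blaschkeFactor (a b : ℂ) : Commute (blaschkeFactor A a) (blaschkeFactor A b) :=
  commute_blaschkeFactor_of_commute (commute_blaschkeFactor_of_commute (Commute.refl A) a).symm b

theorem blaschkeFactor_mul_denom (hA : ∀ μ ∈ spectrum ℂ A, ‖μ‖ < 1) {a : ℂ} (ha : ‖a‖ ≤ 1) :
    blaschkeFactor A a * (1 - starRingEnd ℂ a • A) = A - a • 1 := by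
  rw [blaschkeFactor, Matrix.mul_assoc, nonsing_inv_mul _ (isUnit_det_one_sub_conj_smul hA ha),
    Matrix.mul_one]

theorem one_sub_conjTranspose_blaschkeFactor_mul (hA : ∀ μ ∈ spectrum ℂ A, ‖μ‖ < 1) {a : ℂ}
    (ha : ‖a‖ ≤ 1) :
    1 - (blaschkeFactor A a)ᴴ * blaschkeFactor A a =
      (1 - ‖a‖ ^ 2) •
        ((1 - starRingEnd ℂ a • A)⁻¹ᴴ * (1 - Aᴴ * A) * (1 - starRingEnd ℂ a • A)⁻¹) := by
  unfold blaschkeFactor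
  set q := 1 - starRingEnd ℂ a • A
  have hq : q * q⁻¹ = 1 := mul_nonsing_inv _ (isUnit_det_one_sub_conj_smul hA ha)
  have hdefect : qᴴ * q - (A - a • 1)ᴴ * (A - a • 1) = (1 - ‖a‖ ^ 2) • (1 - Aᴴ * A) := by
    have hnorm : star a * a = ((‖a‖ ^ 2 : ℝ) : ℂ) := by
      push_cast
      exact Complex.conj_mul' a
    simp only [q, conjTranspose_sub, conjTranspose_smul, conjTranspose_one, starRingEnd_apply,
      star_star, Matrix.mul_sub, Matrix.sub_mul, smul_mul_assoc, mul_smul_comm,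
      Matrix.mul_one, Matrix.one_mul, RCLike.real_smul_eq_coe_smul (K := ℂ)]
    linear_combination (norm := module) hnorm • (Aᴴ * A - 1)
  have hqq : q⁻¹ᴴ * qᴴ * q * q⁻¹ = 1 := by
    rw [Matrix.mul_assoc _ q, hq, Matrix.mul_one, ← conjTranspose_mul, hq, conjTranspose_one]
  calc 1 - ((A - a • 1) * q⁻¹)ᴴ * ((A - a • 1) * q⁻¹)
      = q⁻¹ᴴ * qᴴ * q * q⁻¹ - q⁻¹ᴴ * (A - a • 1)ᴴ * (A - a • 1) * q⁻¹ := by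
        rw [hqq, conjTranspose_mul]
        simp only [Matrix.mul_assoc]
    _ = q⁻¹ᴴ * (qᴴ * q - (A - a • 1)ᴴ * (A - a • 1)) * q⁻¹ := by noncomm_ring
    _ = _ := by rw [hdefect, Matrix.mul_smul, Matrix.smul_mul]

theorem posSemidef_one_sub_conjTranspose_blaschkeFactor_mul (hD : (1 - Aᴴ * A).PosSemidef)
    (hA : ∀ μ ∈ spectrum ℂ A, ‖μ‖ < 1) {a : ℂ} (ha : ‖a‖ ≤ 1) :
    (1 - (blaschkeFactor A a)ᴴ * blaschkeFactor A a).PosSemidef := by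
  rw [one_sub_conjTranspose_blaschkeFactor_mul hA ha]
  exact (hD.conjTranspose_mul_mul_same _).smul (sub_nonneg.mpr (pow_le_one₀ (norm_nonneg a) ha))

theorem defect_mulVec_eq_zero_of_blaschkeFactor (hD : (1 - Aᴴ * A).PosSemidef)
    (hA : ∀ μ ∈ spectrum ℂ A, ‖μ‖ < 1) {a : ℂ} (ha : ‖a‖ < 1) {x : ι → ℂ}
    (hx : (1 - (blaschkeFactor A a)ᴴ * blaschkeFactor A a) *ᵥ x = 0) :
    (1 - Aᴴ * A) *ᵥ ((1 - starRingEnd ℂ a • A)⁻¹ *ᵥ x) = 0 := by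
  rw [one_sub_conjTranspose_blaschkeFactor_mul hA ha.le, smul_mulVec, smul_eq_zero] at hx
  have ha' : (1 - ‖a‖ ^ 2 : ℝ) ≠ 0 := by nlinarith [norm_nonneg a]
  exact hD.mulVec_mulVec_eq_zero _ (hx.resolve_left ha')

theorem defect_mulVec_eq_zero_of_mul_blaschkeFactor (hD : (1 - Aᴴ * A).PosSemidef)
    (hA : ∀ μ ∈ spectrum ℂ A, ‖μ‖ < 1) {a : ℂ} (ha : ‖a‖ < 1) {P : Matrix ι ι ℂ}
    (hP : (1 - Pᴴ * P).PosSemidef) {x : ι → ℂ}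
    (hx : (1 - (P * blaschkeFactor A a)ᴴ * (P * blaschkeFactor A a)) *ᵥ x = 0) :
    (1 - Pᴴ * P) *ᵥ (blaschkeFactor A a *ᵥ x) = 0 ∧
      (1 - Aᴴ * A) *ᵥ ((1 - starRingEnd ℂ a • A)⁻¹ *ᵥ x) = 0 := by
  rw [one_sub_conjTranspose_mul_mul_eq] at hx
  obtain ⟨h1, h2⟩ := (hP.conjTranspose_mul_mul_same _).mulVec_eq_zero_of_add_mulVec_eq_zero
    (posSemidef_one_sub_conjTranspose_blaschkeFactor_mul hD hA ha.le) hx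
  exact ⟨hP.mulVec_mulVec_eq_zero _ h1, defect_mulVec_eq_zero_of_blaschkeFactor hD hA ha h2⟩

theorem norm_eq_one_of_mulVec_eq_smul {μ : ℂ} {w : ι → ℂ} (hw : w ≠ 0) (hAw : A *ᵥ w = μ • w)
    (hDw : (1 - Aᴴ * A) *ᵥ w = 0) : ‖μ‖ = 1 := by
  have hww : star w ⬝ᵥ w ≠ 0 := fun h => hw (dotProduct_star_self_eq_zero.mp h)
  have key : (1 - (‖μ‖ : ℂ) ^ 2) * (star w ⬝ᵥ w) = 0 := by
    have := congrArg (star w ⬝ᵥ ·) hDw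
    simp only [sub_mulVec, one_mulVec, ← mulVec_mulVec, dotProduct_sub, dotProduct_zero] at this
    rw [dotProduct_mulVec, ← star_mulVec, hAw, star_smul, smul_dotProduct, dotProduct_smul,
      smul_smul, smul_eq_mul, show star μ * μ = (‖μ‖ : ℂ) ^ 2 from Complex.conj_mul' μ] at this
    linear_combination this
  have : (‖μ‖ : ℂ) ^ 2 = 1 := (sub_eq_zero.mp ((mul_eq_zero.mp key).resolve_right hww)).symm
  exact (pow_eq_one_iff_of_nonneg (norm_nonneg μ) two_ne_zero).mp (by exact_mod_cast this)

theorem eq_bot_of_invariant_of_defect_eq_zero (hA : ∀ μ ∈ spectrum ℂ A, ‖μ‖ < 1)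
    {W : Submodule ℂ (ι → ℂ)} (hWA : ∀ w ∈ W, A *ᵥ w ∈ W)
    (hWD : ∀ w ∈ W, (1 - Aᴴ * A) *ᵥ w = 0) : W = ⊥ := by
  by_contra hW
  have : Nontrivial W := Submodule.nontrivial_iff_ne_bot.mpr hW
  obtain ⟨μ, hμ⟩ := Module.End.exists_eigenvalue ((toLin' A).restrict hWA)
  obtain ⟨⟨w, hwW⟩, hw⟩ := hμ.exists_hasEigenvector
  have hAw : A *ᵥ w = μ • w := congrArg Subtype.val hw.apply_eq_smul
  have hw0 : w ≠ 0 := fun h => hw.2 (Subtype.ext h)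
  have hμA : μ ∈ spectrum ℂ A := by
    rw [← spectrum_toLin']
    exact Module.End.HasEigenvalue.mem_spectrum
      (Module.End.hasEigenvalue_of_hasEigenvector ⟨Module.End.mem_eigenspace_iff.mpr hAw, hw0⟩)
  exact (hA μ hμA).ne (norm_eq_one_of_mulVec_eq_smul hw0 hAw (hWD w hwW))

theorem eq_zero_of_defect_aeval_mulVec_eq_zero (hA : ∀ μ ∈ spectrum ℂ A, ‖μ‖ < 1) {d : ℕ}
    (hd : Fintype.card ι ≤ d) {y : ι → ℂ}
    (hy : ∀ f : ℂ[X], f.degree < d → (1 - Aᴴ * A) *ᵥ (aeval A f *ᵥ y) = 0) : y = 0 := by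
  have hall (f : ℂ[X]) : (1 - Aᴴ * A) *ᵥ (aeval A f *ᵥ y) = 0 := by
    rw [← aeval_modByMonic_eq_self_of_root A.aeval_self_charpoly]
    refine hy _ ((degree_modByMonic_lt f A.charpoly_monic).trans_le ?_)
    rw [charpoly_degree_eq_dim]
    exact_mod_cast hd
  let W : Submodule ℂ (ι → ℂ) := ⨅ f : ℂ[X], LinearMap.ker (toLin' ((1 - Aᴴ * A) * aeval A f))
  have hmem (v : ι → ℂ) : v ∈ W ↔ ∀ f : ℂ[X], (1 - Aᴴ * A) *ᵥ (aeval A f *ᵥ v) = 0 := by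
    simp only [W, Submodule.mem_iInf, LinearMap.mem_ker, toLin'_apply, mulVec_mulVec]
  have hW : W = ⊥ := by
    refine eq_bot_of_invariant_of_defect_eq_zero hA (fun w hw => (hmem _).mpr fun f => ?_)
      fun w hw => by simpa using (hmem w).mp hw 1
    have hfX : aeval A f *ᵥ (A *ᵥ w) = aeval A (f * X) *ᵥ w := by
      rw [map_mul, aeval_X, mulVec_mulVec]
    rw [hfX]
    exact (hmem w).mp hw _
  simpa [hW] using (hmem y).mpr hall

theorem aeval_blaschkeDenom_cons (a : ℂ) (L : List ℂ) :
    aeval A (blaschkeDenom (a :: L)) = (1 - starRingEnd ℂ a • A) * aeval A (blaschkeDenom L) := by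
  rw [blaschkeDenom_cons, map_mul, map_sub, map_one, map_mul, aeval_C, aeval_X, ← Algebra.smul_def]

theorem isUnit_aeval_blaschkeDenom (hA : ∀ μ ∈ spectrum ℂ A, ‖μ‖ < 1) {L : List ℂ}
    (hL : ∀ a ∈ L, ‖a‖ ≤ 1) : IsUnit (aeval A (blaschkeDenom L)) := by
  induction L with
  | nil => simp [blaschkeDenom]
  | cons a L ih =>
    rw [aeval_blaschkeDenom_cons]
    exact (isUnit_one_sub_smul hA (by rw [RCLike.norm_conj]; exact hL a List.mem_cons_self)).mul
      (ih fun b hb => hL b (List.mem_cons_of_mem a hb))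

theorem defect_aeval_mulVec_eq_zero_of_blaschke (hD : (1 - Aᴴ * A).PosSemidef)
    (hA : ∀ μ ∈ spectrum ℂ A, ‖μ‖ < 1) {L : List ℂ} (hL : ∀ a ∈ L, ‖a‖ < 1) {y : ι → ℂ}
    (hy : (1 - (L.map (blaschkeFactor A)).prodᴴ * (L.map (blaschkeFactor A)).prod) *ᵥ
      (aeval A (blaschkeDenom L) *ᵥ y) = 0)
    {f : ℂ[X]} (hf : f.degree < L.length) : (1 - Aᴴ * A) *ᵥ (aeval A f *ᵥ y) = 0 := by
  induction L generalizing y f with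
  | nil =>
    simp only [List.length_nil, CharP.cast_eq_zero, Nat.WithBot.lt_zero_iff, degree_eq_bot] at hf
    simp [hf]
  | cons a L ih =>
    have ha := hL a List.mem_cons_self
    have hL' (b) (hb : b ∈ L) := hL b (List.mem_cons_of_mem a hb)
    set P := (L.map (blaschkeFactor A)).prod
    set Q := aeval A (blaschkeDenom L)
    have hP : (1 - Pᴴ * P).PosSemidef := PosSemidef.one_sub_conjTranspose_list_prod_mul <| by
      simpa using fun b hb =>
        posSemidef_one_sub_conjTranspose_blaschkeFactor_mul hD hA (hL' b hb).le
    have hcomm : ((a :: L).map (blaschkeFactor A)).prod = P * blaschkeFactor A a := by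
      rw [List.map_cons, List.prod_cons]
      refine (Commute.list_prod_right _ _ fun x hx => ?_).eq
      obtain ⟨b, -, rfl⟩ := List.mem_map.mp hx
      exact commute_blaschkeFactor a b
    rw [hcomm, aeval_blaschkeDenom_cons] at hy
    obtain ⟨h1, h2⟩ := defect_mulVec_eq_zero_of_mul_blaschkeFactor hD hA ha hP hy
    have hshift {g : ℂ[X]} (hg : g.degree < L.length) :
        (1 - Aᴴ * A) *ᵥ (aeval A g *ᵥ (aeval A (X - C a) *ᵥ y)) = 0 := by
      refine ih hL' ?_ hg
      -- `bₐ(A) qₐ Q(A) = (A - a) Q(A) = Q(A) (A - a)`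
      rwa [mulVec_mulVec _ (blaschkeFactor A a), ← Matrix.mul_assoc,
        blaschkeFactor_mul_denom hA ha.le,
        show A - a • 1 = aeval A (X - C a) by simp [Algebra.algebraMap_eq_smul_one], ← map_mul,
        mul_comm, map_mul, ← mulVec_mulVec] at h1
    have hQ : (1 - Aᴴ * A) *ᵥ (Q *ᵥ y) = 0 := by
      rwa [mulVec_mulVec _ (1 - _ • A)⁻¹, ← Matrix.mul_assoc,
        nonsing_inv_mul _ (isUnit_det_one_sub_conj_smul hA ha.le), Matrix.one_mul] at h2
    obtain ⟨k, h, hh, rfl⟩ := exists_eq_smul_add_X_sub_C_mul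
      (eval_blaschkeDenom_ne_zero (fun b hb => (hL' b hb).le) ha) (degree_blaschkeDenom_le L) hf
    rw [map_add, map_smul, add_mulVec, smul_mulVec, mulVec_add, mulVec_smul, hQ, mul_comm,
      map_mul, ← mulVec_mulVec, hshift hh, smul_zero, add_zero]

theorem isUnit_one_sub_conjTranspose_blaschke_prod_mul (hD : (1 - Aᴴ * A).PosSemidef)
    (hA : ∀ μ ∈ spectrum ℂ A, ‖μ‖ < 1) {L : List ℂ} (hL : ∀ a ∈ L, ‖a‖ < 1)
    (hd : Fintype.card ι ≤ L.length) :
    IsUnit (1 - (L.map (blaschkeFactor A)).prodᴴ * (L.map (blaschkeFactor A)).prod) := by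
  rw [isUnit_iff_isUnit_det, isUnit_iff_ne_zero, Ne, ← exists_mulVec_eq_zero_iff]
  rintro ⟨x, hx0, hx⟩
  obtain ⟨y, rfl⟩ := mulVec_surjective_iff_isUnit.mpr
    (isUnit_aeval_blaschkeDenom hA fun a ha => (hL a ha).le) x
  refine hx0 ?_
  rw [eq_zero_of_defect_aeval_mulVec_eq_zero hA hd fun f hf =>
    defect_aeval_mulVec_eq_zero_of_blaschke hD hA hL hx hf, mulVec_zero]

end Matrix

/-- If `A` is an `n×n` stable contraction and `φ` is a finite Blaschke product of
degree `d ≥ n`, then `1` is not an eigenvalue of `φ(A)ᴴ φ(A)`; equivalently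
`I - φ(A)ᴴ φ(A)` is invertible, so the defect index of `φ(A)` equals `n`. -/
theorem stmt_10 {n d : ℕ}
    (A : Matrix (Fin n) (Fin n) ℂ)
    (hA_contr : (1 - Aᴴ * A).PosSemidef)
    (hA_stable : ∀ μ ∈ spectrum ℂ A, ‖μ‖ < 1)
    (ζ : ℂ) (hζ : ‖ζ‖ = 1) (α : Fin d → ℂ) (hα : ∀ k, ‖α k‖ < 1)
    (hd : n ≤ d) :
    (1 : ℂ) ∉ spectrum ℂ ((blaschkeMatrix ζ α A)ᴴ * blaschkeMatrix ζ α A) ∧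
    IsUnit (1 - (blaschkeMatrix ζ α A)ᴴ * blaschkeMatrix ζ α A) ∧
    (1 - (blaschkeMatrix ζ α A)ᴴ * blaschkeMatrix ζ α A).rank = n := by
  set P := ((List.ofFn α).map (blaschkeFactor A)).prod
  have hφ : (blaschkeMatrix ζ α A)ᴴ * blaschkeMatrix ζ α A = Pᴴ * P := by
    have hζ' : star ζ * ζ = 1 := by
      rw [show star ζ * ζ = (‖ζ‖ : ℂ) ^ 2 from Complex.conj_mul' ζ, hζ]
      norm_num
    rw [blaschkeMatrix, conjTranspose_smul, Matrix.smul_mul, Matrix.mul_smul, smul_smul, hζ',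
      one_smul]
    simp only [P, List.map_ofFn]
    rfl
  have hunit : IsUnit (1 - Pᴴ * P) :=
    isUnit_one_sub_conjTranspose_blaschke_prod_mul hA_contr hA_stable
      (by simpa [List.mem_ofFn] using hα) (by simpa using hd)
  rw [hφ]
  refine ⟨?_, hunit, by rw [rank_of_isUnit _ hunit, Fintype.card_fin]⟩
  rwa [spectrum.mem_iff, not_not, Algebra.algebraMap_eq_smul_one, one_smul]
end

section
/- Let A be an n×n complex matrix with I − Aᴴ A positive semidefinite (i.e. A is a contraction), and let φ be a finite Blaschke product of degree d determined by ζ and α_1, …, α_d. Then each matrix I − conj(α_k)·A is invertible, each Möbius factor (A − α_k·I)(I − conj(α_k)·A)⁻¹ is a contraction (indeed (I − conj(α_k)·A)ᴴ(I − conj(α_k)·A) − (A − α_k·I)ᴴ(A − α_k·I) = (1 − |α_k|²)(I − AᴴA)), and consequently φ(A) is a contraction: I − φ(A)ᴴ φ(A) is positive semidefinite. -/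
/-!
Write `B = I - ᾱA` and `C = A - αI`. Expanding gives the Möbius identity
`BᴴB - CᴴC = (1 - |α|²)(I - AᴴA)`, and `I - (CB⁻¹)ᴴ(CB⁻¹) = (B⁻¹)ᴴ(BᴴB - CᴴC)B⁻¹`, so each factor
`CB⁻¹` of `φ(A)` is a contraction. `B` is invertible because `Bz = 0` gives `z = ᾱAz`, hence
`‖z‖ ≤ |α| ‖z‖`. Finally contractions are closed under products, since
`I - (XY)ᴴXY = (I - YᴴY) + Yᴴ(I - XᴴX)Y`, and under multiplication by the unimodular `ζ`.
-/

open Matrix ComplexOrder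

namespace Matrix

variable {m : Type*} [Fintype m] [DecidableEq m]

def IsContraction {R : Type*} [Ring R] [PartialOrder R] [StarRing R] (A : Matrix m m R) :
    Prop :=
  (1 - Aᴴ * A).PosSemidef

lemma one_sub_conjTranspose_mul_self_mul_inv {R : Type*} [CommRing R] [StarRing R]
    {B C : Matrix m m R} (hB : IsUnit B) :
    1 - (C * B⁻¹)ᴴ * (C * B⁻¹) = (B⁻¹)ᴴ * (Bᴴ * B - Cᴴ * C) * B⁻¹ := by
  have hBB : B * B⁻¹ = 1 := mul_nonsing_inv B ((isUnit_iff_isUnit_det B).mp hB)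
  calc 1 - (C * B⁻¹)ᴴ * (C * B⁻¹) = (B * B⁻¹)ᴴ * (B * B⁻¹) - (C * B⁻¹)ᴴ * (C * B⁻¹) := by
        rw [hBB, conjTranspose_one, mul_one]
    _ = (B⁻¹)ᴴ * (Bᴴ * B - Cᴴ * C) * B⁻¹ := by
        simp only [conjTranspose_mul]
        noncomm_ring

section CommRing

variable {R : Type*} [CommRing R] [PartialOrder R] [StarRing R]

lemma IsContraction.mul_inv_of_posSemidef {B C : Matrix m m R} (hB : IsUnit B)
    (h : (Bᴴ * B - Cᴴ * C).PosSemidef) : (C * B⁻¹).IsContraction := by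
  unfold IsContraction
  rw [one_sub_conjTranspose_mul_self_mul_inv hB]
  exact h.conjTranspose_mul_mul_same _

variable [StarOrderedRing R]

lemma IsContraction.mul {X Y : Matrix m m R} (hX : X.IsContraction) (hY : Y.IsContraction) :
    (X * Y).IsContraction := by
  have h : 1 - (X * Y)ᴴ * (X * Y) = (1 - Yᴴ * Y) + Yᴴ * (1 - Xᴴ * X) * Y := by
    simp only [conjTranspose_mul]
    noncomm_ring
  unfold IsContraction
  rw [h]
  exact hY.add (hX.conjTranspose_mul_mul_same Y)

lemma IsContraction.list_prod {l : List (Matrix m m R)} (hl : ∀ X ∈ l, X.IsContraction) :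
    l.prod.IsContraction := by
  induction l with
  | nil => simpa [IsContraction] using PosSemidef.zero
  | cons X l ih =>
    rw [List.forall_mem_cons] at hl
    exact hl.1.mul (ih hl.2)

end CommRing

lemma isContraction_smul_one {c : ℂ} (hc : ‖c‖ ≤ 1) : (c • 1 : Matrix m m ℂ).IsContraction := by
  have h : (1 : Matrix m m ℂ) - (c • 1)ᴴ * (c • 1) = ((1 - ‖c‖ ^ 2 : ℝ) : ℂ) • 1 := by
    rw [conjTranspose_smul, conjTranspose_one, smul_mul_smul, one_mul, Complex.star_def,
      Complex.conj_mul']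
    push_cast
    rw [sub_smul, one_smul]
  unfold IsContraction
  rw [h]
  exact PosSemidef.one.smul
    (Complex.zero_le_real.mpr (sub_nonneg.mpr (pow_le_one₀ (norm_nonneg c) hc)))

lemma IsContraction.smul {X : Matrix m m ℂ} (hX : X.IsContraction) {c : ℂ} (hc : ‖c‖ ≤ 1) :
    (c • X).IsContraction := by
  simpa using (isContraction_smul_one hc).mul hX

lemma IsContraction.star_mulVec_dotProduct_le {A : Matrix m m ℂ} (hA : A.IsContraction)
    (x : m → ℂ) : star (A *ᵥ x) ⬝ᵥ (A *ᵥ x) ≤ star x ⬝ᵥ x := by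
  have := hA.dotProduct_mulVec_nonneg x
  rwa [sub_mulVec, dotProduct_sub, one_mulVec, sub_nonneg, ← mulVec_mulVec,
    dotProduct_mulVec, ← star_mulVec] at this

lemma IsContraction.isUnit_one_sub_smul {A : Matrix m m ℂ} (hA : A.IsContraction) {c : ℂ}
    (hc : ‖c‖ < 1) : IsUnit (1 - c • A) := by
  rw [isUnit_iff_isUnit_det, isUnit_iff_ne_zero, Ne, ← exists_mulVec_eq_zero_iff]
  rintro ⟨z, hz0, hz⟩
  rw [sub_mulVec, one_mulVec, sub_eq_zero, smul_mulVec] at hz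
  have hc2 : ((‖c‖ ^ 2 : ℝ) : ℂ) < 1 := by
    exact_mod_cast pow_lt_one₀ (norm_nonneg c) hc two_ne_zero
  have hle : star z ⬝ᵥ z ≤ ((‖c‖ ^ 2 : ℝ) : ℂ) * star z ⬝ᵥ z := by
    calc star z ⬝ᵥ z = ((‖c‖ ^ 2 : ℝ) : ℂ) * star (A *ᵥ z) ⬝ᵥ (A *ᵥ z) := by
          conv_lhs => rw [hz]
          rw [star_smul, smul_dotProduct, dotProduct_smul, smul_smul, smul_eq_mul,
            Complex.star_def, Complex.conj_mul']
          push_cast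
          ring
      _ ≤ ((‖c‖ ^ 2 : ℝ) : ℂ) * star z ⬝ᵥ z :=
          mul_le_mul_of_nonneg_left (hA.star_mulVec_dotProduct_le z) (by positivity)
  exact (mul_lt_of_lt_one_left (dotProduct_star_self_pos_iff.mpr hz0) hc2).not_ge hle

lemma conjTranspose_mul_self_sub_moebius (A : Matrix m m ℂ) (a : ℂ) :
    (1 - starRingEnd ℂ a • A)ᴴ * (1 - starRingEnd ℂ a • A) - (A - a • 1)ᴴ * (A - a • 1) =
      ((1 - ‖a‖ ^ 2 : ℝ) : ℂ) • (1 - Aᴴ * A) := by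
  simp only [conjTranspose_sub, conjTranspose_smul, conjTranspose_one, Complex.star_def,
    Complex.conj_conj, Matrix.sub_mul, Matrix.mul_sub, Matrix.smul_mul, Matrix.mul_smul,
    Matrix.one_mul, Matrix.mul_one, smul_sub, smul_smul, Complex.conj_mul', Complex.mul_conj']
  push_cast
  module

end Matrix

/-- If `A` is a matrix contraction and `φ` a finite Blaschke product, then each
`I - conj(αₖ)A` is invertible, each Möbius factor `(A - αₖ I)(I - conj(αₖ)A)⁻¹` is a
contraction — indeed
`(I - conj(αₖ)A)ᴴ(I - conj(αₖ)A) - (A - αₖ I)ᴴ(A - αₖ I) = (1 - |αₖ|²)(I - AᴴA)` —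
and consequently `φ(A)` is a contraction. -/
theorem stmt_12 {n d : ℕ}
    (A : Matrix (Fin n) (Fin n) ℂ)
    (hA_contr : (1 - Aᴴ * A).PosSemidef)
    (ζ : ℂ) (hζ : ‖ζ‖ = 1) (α : Fin d → ℂ) (hα : ∀ k, ‖α k‖ < 1) :
    (∀ k : Fin d, IsUnit (1 - (starRingEnd ℂ) (α k) • A)) ∧
    (∀ k : Fin d,
      (1 - (starRingEnd ℂ) (α k) • A)ᴴ * (1 - (starRingEnd ℂ) (α k) • A) -
          (A - α k • 1)ᴴ * (A - α k • 1) =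
        ((1 - ‖α k‖ ^ 2 : ℝ) : ℂ) • (1 - Aᴴ * A)) ∧
    (∀ k : Fin d,
      (1 - ((A - α k • 1) * (1 - (starRingEnd ℂ) (α k) • A)⁻¹)ᴴ *
        ((A - α k • 1) * (1 - (starRingEnd ℂ) (α k) • A)⁻¹)).PosSemidef) ∧
    (1 - (blaschkeMatrix ζ α A)ᴴ * blaschkeMatrix ζ α A).PosSemidef := by
  have hA : A.IsContraction := hA_contr
  have hunit (k : Fin d) : IsUnit (1 - starRingEnd ℂ (α k) • A) :=
    hA.isUnit_one_sub_smul (by rw [Complex.norm_conj]; exact hα k)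
  have hfactor (k : Fin d) :
      ((A - α k • 1) * (1 - starRingEnd ℂ (α k) • A)⁻¹).IsContraction := by
    refine .mul_inv_of_posSemidef (hunit k) ?_
    rw [conjTranspose_mul_self_sub_moebius]
    exact hA_contr.smul (Complex.zero_le_real.mpr
      (sub_nonneg.mpr (pow_lt_one₀ (norm_nonneg _) (hα k) two_ne_zero).le))
  refine ⟨hunit, fun k => conjTranspose_mul_self_sub_moebius A (α k), hfactor, ?_⟩
  refine IsContraction.smul (IsContraction.list_prod ?_) hζ.le
  simpa [List.mem_ofFn] using hfactor
end
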